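/- arXiv:1607.03862 — 6 statements merged into one kernel-verified Lean document; each statement's English description precedes it below -/
import Mathlib

section
/- Let A : [0,∞) → [0,∞) be an aggregation function such that its super-additive transformation A* is finite-valued and strictly convex. Then A(x) = A*(x) for every x ∈ [0,∞). -/
/-!
Since `A*` is convex with `A*(0) = 0`, its slope `A*(t) / t` is nondecreasing, so the parts of a
decomposition that are all at most `s` contribute at most `(∑ parts) · A*(s) / s`, using `A ≤ A*`.
Suppose `A(x) < A*(x)` and choose a small `δ > 0`. A decomposition of `x` with a part larger than
`x - δ` sums to at most `A(x) + δ · A*(x) / x` (monotonicity bounds the large part by `A(x)`), and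
any other decomposition to at most `x · A*(x - δ) / (x - δ)`, which is `< A*(x)` by strict
convexity. Both bounds stay below `A*(x)`, contradicting that `A*(x)` is the supremum.
-/

open Finset Set

theorem ConvexOn.le_mul_div_of_le {f : ℝ → ℝ} (hf : ConvexOn ℝ (Ici 0) f) (h0 : f 0 = 0)
    {s t : ℝ} (ht : 0 ≤ t) (hts : t ≤ s) : f t ≤ t * (f s / s) := by
  rcases ht.eq_or_lt with rfl | ht
  · simp [h0]
  have h := hf.secant_mono (a := 0) (mem_Ici.2 le_rfl) ht.le (ht.le.trans hts) ht.ne'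
    (ht.trans_le hts).ne' hts
  simp only [h0, sub_zero] at h
  rwa [div_le_iff₀ ht, mul_comm] at h

theorem StrictConvexOn.div_lt_div_of_lt {f : ℝ → ℝ} (hf : StrictConvexOn ℝ (Ici 0) f)
    (h0 : f 0 = 0) {s t : ℝ} (ht : 0 < t) (hts : t < s) : f t / t < f s / s := by
  simpa [h0] using hf.secant_strict_mono (a := 0) (mem_Ici.2 le_rfl) ht.le (ht.trans hts).le
    ht.ne' (ht.trans hts).ne' hts

theorem sum_le_sum_mul_div_of_le {ι : Type*} {A f : ℝ → ℝ} (hAf : ∀ t, 0 ≤ t → A t ≤ f t)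
    (hf : ConvexOn ℝ (Ici 0) f) (hf0 : f 0 = 0) {S : Finset ι} {c : ι → ℝ} {s : ℝ}
    (hc : ∀ j ∈ S, 0 ≤ c j ∧ c j ≤ s) : ∑ j ∈ S, A (c j) ≤ (∑ j ∈ S, c j) * (f s / s) := by
  rw [Finset.sum_mul]
  exact Finset.sum_le_sum fun j hj =>
    (hAf _ (hc j hj).1).trans (hf.le_mul_div_of_le hf0 (hc j hj).1 (hc j hj).2)

/-- The set whose supremum is the super-additive transform `A* x`. -/
def decompositionSums (A : ℝ → ℝ) (x : ℝ) : Set ℝ :=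
  {s : ℝ | ∃ (k : ℕ) (c : Fin k → ℝ), 1 ≤ k ∧ (∀ j, 0 ≤ c j) ∧
    (∑ j, c j) ≤ x ∧ s = ∑ j, A (c j)}

section SuperadditiveTransform

variable {A Astar : ℝ → ℝ}

theorem apply_mem_decompositionSums {t x : ℝ} (ht : 0 ≤ t) (htx : t ≤ x) :
    A t ∈ decompositionSums A x :=
  ⟨1, fun _ => t, le_rfl, fun _ => ht, by simpa using htx, by simp⟩

theorem le_superTransform (hstar : ∀ x, 0 ≤ x → IsLUB (decompositionSums A x) (Astar x))
    {t : ℝ} (ht : 0 ≤ t) : A t ≤ Astar t :=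
  (hstar t ht).1 (apply_mem_decompositionSums ht le_rfl)

theorem superTransform_nonneg (hA0 : A 0 = 0)
    (hstar : ∀ x, 0 ≤ x → IsLUB (decompositionSums A x) (Astar x)) {t : ℝ} (ht : 0 ≤ t) :
    0 ≤ Astar t :=
  hA0 ▸ (hstar t ht).1 (apply_mem_decompositionSums le_rfl ht)

theorem superTransform_zero (hA0 : A 0 = 0)
    (hstar : ∀ x, 0 ≤ x → IsLUB (decompositionSums A x) (Astar x)) : Astar 0 = 0 := by
  refine le_antisymm ((hstar 0 le_rfl).2 ?_) (superTransform_nonneg hA0 hstar le_rfl)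
  rintro _ ⟨k, c, -, hc, hsum, rfl⟩
  have hc0 : ∀ j, c j = 0 := fun j => (Finset.sum_eq_zero_iff_of_nonneg fun i _ => hc i).1
    (hsum.antisymm (Finset.sum_nonneg fun i _ => hc i)) j (mem_univ j)
  simp [hc0, hA0]

theorem superTransform_le_max (hA0 : A 0 = 0) (hmono : MonotoneOn A (Ici 0))
    (hstar : ∀ x, 0 ≤ x → IsLUB (decompositionSums A x) (Astar x))
    (hconv : ConvexOn ℝ (Ici 0) Astar) {x δ : ℝ} (hx : 0 ≤ x) (hδx : δ ≤ x) :
    Astar x ≤ max (A x + δ * (Astar x / x)) (x * (Astar (x - δ) / (x - δ))) := by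
  have hAle : ∀ t, 0 ≤ t → A t ≤ Astar t := fun t => le_superTransform hstar
  have h0 := superTransform_zero hA0 hstar
  refine (hstar x hx).2 ?_
  rintro _ ⟨k, c, -, hc, hsum, rfl⟩
  have hcx : ∀ j, c j ≤ x := fun j =>
    (Finset.single_le_sum (fun i _ => hc i) (mem_univ j)).trans hsum
  by_cases hbig : ∃ i, x - δ < c i
  · obtain ⟨i, hi⟩ := hbig
    have hrest : ∑ j ∈ univ.erase i, c j ≤ δ := by
      linarith [Finset.add_sum_erase univ c (mem_univ i)]
    have hslope : 0 ≤ Astar x / x := div_nonneg (superTransform_nonneg hA0 hstar hx) hx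
    rw [← Finset.add_sum_erase univ _ (mem_univ i)]
    refine le_max_of_le_left (add_le_add (hmono (hc i) hx (hcx i)) ?_)
    calc ∑ j ∈ univ.erase i, A (c j) ≤ (∑ j ∈ univ.erase i, c j) * (Astar x / x) :=
          sum_le_sum_mul_div_of_le hAle hconv h0 fun j _ => ⟨hc j, hcx j⟩
      _ ≤ δ * (Astar x / x) := mul_le_mul_of_nonneg_right hrest hslope
  · push Not at hbig
    have hslope : 0 ≤ Astar (x - δ) / (x - δ) :=
      div_nonneg (superTransform_nonneg hA0 hstar (sub_nonneg.2 hδx)) (sub_nonneg.2 hδx)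
    refine le_max_of_le_right ?_
    calc ∑ j, A (c j) ≤ (∑ j, c j) * (Astar (x - δ) / (x - δ)) :=
          sum_le_sum_mul_div_of_le hAle hconv h0 fun j _ => ⟨hc j, hbig j⟩
      _ ≤ x * (Astar (x - δ) / (x - δ)) := mul_le_mul_of_nonneg_right hsum hslope

end SuperadditiveTransform

theorem eq_superTransform_of_strictConvex_general
    (A Astar : ℝ → ℝ)
    (hA0 : A 0 = 0) (hmono : MonotoneOn A (Set.Ici 0))
    (hstar : ∀ x, 0 ≤ x →
      IsLUB {s : ℝ | ∃ (k : ℕ) (c : Fin k → ℝ), 1 ≤ k ∧ (∀ j, 0 ≤ c j) ∧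
        (∑ j, c j) ≤ x ∧ s = ∑ j, A (c j)} (Astar x))
    (hconv : StrictConvexOn ℝ (Set.Ici 0) Astar) :
    ∀ x, 0 ≤ x → A x = Astar x := by
  have h0 : Astar 0 = 0 := superTransform_zero hA0 hstar
  intro x hx
  rcases hx.eq_or_lt with rfl | hxpos
  · rw [hA0, h0]
  refine (le_superTransform hstar hx).antisymm (not_lt.1 fun hlt => ?_)
  obtain ⟨ε, hε, hεgap⟩ := exists_pos_mul_lt (sub_pos.2 hlt) (Astar x / x)
  set δ := min ε (x / 2)
  have hδ : 0 < δ := lt_min hε (half_pos hxpos)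
  have hδx : δ < x := (min_le_right _ _).trans_lt (half_lt_self hxpos)
  have hbig : A x + δ * (Astar x / x) < Astar x := by
    have : δ * (Astar x / x) ≤ ε * (Astar x / x) := mul_le_mul_of_nonneg_right (min_le_left _ _)
      (div_nonneg (superTransform_nonneg hA0 hstar hx) hx)
    linarith
  have hsmall : x * (Astar (x - δ) / (x - δ)) < Astar x := by
    calc x * (Astar (x - δ) / (x - δ)) < x * (Astar x / x) := mul_lt_mul_of_pos_left
          (hconv.div_lt_div_of_lt h0 (sub_pos.2 hδx) (sub_lt_self x hδ)) hxpos
      _ = Astar x := mul_div_cancel₀ _ hxpos.ne'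
  exact (superTransform_le_max hA0 hmono hstar hconv.convexOn hx hδx.le).not_gt
    (max_lt hbig hsmall)

/-- If `A : [0,∞) → [0,∞)` is an aggregation function whose super-additive
transformation `A*` is finite-valued (here: real-valued, given by an `IsLUB`) and strictly
convex, then `A = A*` on `[0,∞)`. -/
theorem eq_superTransform_of_strictConvex
    (A Astar : ℝ → ℝ)
    (hA0 : A 0 = 0) (hAnonneg : ∀ x, 0 ≤ x → 0 ≤ A x) (hmono : MonotoneOn A (Set.Ici 0))
    (hstar : ∀ x, 0 ≤ x →
      IsLUB {s : ℝ | ∃ (k : ℕ) (c : Fin k → ℝ), 1 ≤ k ∧ (∀ j, 0 ≤ c j) ∧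
        (∑ j, c j) ≤ x ∧ s = ∑ j, A (c j)} (Astar x))
    (hconv : StrictConvexOn ℝ (Set.Ici 0) Astar) :
    ∀ x, 0 ≤ x → A x = Astar x :=
  eq_superTransform_of_strictConvex_general A Astar hA0 hmono hstar hconv
end

section
/- Let A : [0,∞) → [0,∞) be an aggregation function whose super-additive transformation A* is finite and strictly convex. Then the sub-additive transformation satisfies A_*(x) = c·x for all x ∈ [0,∞), where c = lim_{t→0⁺} A(t)/t. -/
/-!
Since `A*` is convex with `A*(0) = 0`, the secant slope `A*(t)/t` is increasing, strictly so by
strict convexity, which makes `A*` strictly superadditive. This forces `A* = A`: if `A(x) < A*(x)`,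
pick `0 < δ < x` with `A*(δ) < A*(x) - A(x)` and split a family of total `≤ x` into a largest
piece `a` and the rest, of total `b`. If `a ≤ δ` the family sums to at most `x A*(δ)/δ`; if
`b ≤ δ`, to at most `A(x) + A*(δ)`; otherwise, pushing `a` and `b` apart by convexity, to at most
`A*(δ) + A*(x - δ)`. All three bounds are `< A*(x)`.

So `A` is convex with `A(0) = 0`, and `A(t)/t` decreases to its infimum `c` as `t → 0⁺`. Then
`c t ≤ A(t)` makes `c x` a lower bound of the sub-additive sums, while `n` equal pieces `x/n`
give the sums `x · A(x/n)/(x/n) → c x`.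
-/

open Set Filter Topology Finset

lemma ConvexOn.map_add_map_le_map_add_map_sub {f : ℝ → ℝ} {S : Set ℝ} (hf : ConvexOn ℝ S f)
    {δ a b : ℝ} (hδ : δ ∈ S) (hu : a + b - δ ∈ S) (hδa : δ ≤ a) (hδb : δ ≤ b) :
    f a + f b ≤ f δ + f (a + b - δ) := by
  rcases (show δ ≤ a + b - δ by linarith).eq_or_lt with h | h
  · obtain ⟨rfl, rfl⟩ : a = δ ∧ b = δ := by constructor <;> linarith
    simp
  -- `a` and `b` are mirror-image convex combinations of `δ` and `a + b - δ`
  set μ := (a - δ) / (a + b - δ - δ)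
  have hμ₀ : 0 ≤ μ := div_nonneg (by linarith) (by linarith)
  have hμ₁ : 0 ≤ 1 - μ := by rw [sub_nonneg, div_le_one (by linarith)]; linarith
  have ha : (1 - μ) • δ + μ • (a + b - δ) = a := by
    simp only [μ, smul_eq_mul]; field_simp; ring
  have hb : μ • δ + (1 - μ) • (a + b - δ) = b := by
    simp only [μ, smul_eq_mul]; field_simp; ring
  have h₁ := ha ▸ hf.2 hδ hu hμ₁ hμ₀ (by ring)
  have h₂ := hb ▸ hf.2 hδ hu hμ₀ hμ₁ (by ring)
  simp only [smul_eq_mul] at h₁ h₂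
  linarith

section ConvexVanishingAtZero

variable {f : ℝ → ℝ} {s t : ℝ}

lemma ConvexOn.map_le_div_mul_of_map_zero (hf : ConvexOn ℝ (Ici 0) f) (hf0 : f 0 = 0)
    (hs : 0 ≤ s) (hst : s ≤ t) (ht : 0 < t) : f s ≤ s / t * f t := by
  rcases hs.eq_or_lt with rfl | hs
  · simp [hf0]
  have := hf.secant_mono self_mem_Ici hs.le ht.le hs.ne' ht.ne' hst
  simp only [hf0, sub_zero] at this
  rwa [div_le_iff₀ hs, div_mul_comm] at this

lemma StrictConvexOn.map_lt_div_mul_of_map_zero (hf : StrictConvexOn ℝ (Ici 0) f)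
    (hf0 : f 0 = 0) (hs : 0 < s) (hst : s < t) : f s < s / t * f t := by
  have ht := hs.trans hst
  have := hf.secant_strict_mono self_mem_Ici hs.le ht.le hs.ne' ht.ne' hst
  simp only [hf0, sub_zero] at this
  rwa [div_lt_iff₀ hs, div_mul_comm] at this

lemma ConvexOn.monotoneOn_div_of_map_zero (hf : ConvexOn ℝ (Ici 0) f) (hf0 : f 0 = 0) :
    MonotoneOn (fun t => f t / t) (Ioi 0) := by
  intro s (hs : 0 < s) t (ht : 0 < t) hst
  simpa [hf0] using hf.secant_mono self_mem_Ici hs.le ht.le hs.ne' ht.ne' hst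

lemma StrictConvexOn.map_add_map_sub_lt_of_map_zero (hf : StrictConvexOn ℝ (Ici 0) f)
    (hf0 : f 0 = 0) (hs : 0 < s) (hst : s < t) : f s + f (t - s) < f t := by
  have h₁ := hf.map_lt_div_mul_of_map_zero hf0 hs hst
  have h₂ := hf.map_lt_div_mul_of_map_zero hf0 (sub_pos.2 hst) (sub_lt_self t hs)
  have ht : t ≠ 0 := (hs.trans hst).ne'
  calc f s + f (t - s) < s / t * f t + (t - s) / t * f t := add_lt_add h₁ h₂
    _ = f t := by field_simp; ring

lemma ConvexOn.exists_map_lt_of_map_zero (hf : ConvexOn ℝ (Ici 0) f) (hf0 : f 0 = 0)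
    {x ε : ℝ} (hx : 0 < x) (hε : 0 < ε) : ∃ δ, 0 < δ ∧ δ < x ∧ f δ < ε := by
  have hlim : Tendsto (fun δ => δ * f 1) (𝓝[>] 0) (𝓝 0) := by
    simpa using ((continuous_mul_const (f 1)).tendsto' 0 0 (zero_mul _)).mono_left
      nhdsWithin_le_nhds
  obtain ⟨δ, hδε, hδ, hδx⟩ :=
    ((hlim.eventually (gt_mem_nhds hε)).and (Ioo_mem_nhdsGT (lt_min hx one_pos))).exists
  refine ⟨δ, hδ, hδx.trans_le (min_le_left _ _), ?_⟩
  calc f δ ≤ δ / 1 * f 1 := hf.map_le_div_mul_of_map_zero hf0 hδ.le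
        (hδx.le.trans (min_le_right _ _)) one_pos
    _ < ε := by simpa using hδε

lemma ConvexOn.sum_map_le_div_mul_sum_of_map_zero {ι : Type*} (hf : ConvexOn ℝ (Ici 0) f)
    (hf0 : f 0 = 0) {s : Finset ι} {c : ι → ℝ} {δ : ℝ} (hδ : 0 < δ)
    (hc : ∀ i ∈ s, 0 ≤ c i ∧ c i ≤ δ) : ∑ i ∈ s, f (c i) ≤ f δ / δ * ∑ i ∈ s, c i := by
  rw [mul_sum]
  refine sum_le_sum fun i hi => ?_
  rw [div_mul_comm]
  exact hf.map_le_div_mul_of_map_zero hf0 (hc i hi).1 (hc i hi).2 hδ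

lemma ConvexOn.exists_tendsto_div_of_map_zero (hf : ConvexOn ℝ (Ici 0) f)
    (hf0 : f 0 = 0) (hnonneg : ∀ t, 0 ≤ t → 0 ≤ f t) :
    ∃ c, Tendsto (fun t => f t / t) (𝓝[>] 0) (𝓝 c) ∧ 0 ≤ c ∧ ∀ t, 0 ≤ t → c * t ≤ f t := by
  have h0 : 0 ∈ lowerBounds ((fun t => f t / t) '' Ioi 0) :=
    forall_mem_image.2 fun t (ht : 0 < t) => div_nonneg (hnonneg t ht.le) ht.le
  refine ⟨_, (hf.monotoneOn_div_of_map_zero hf0).tendsto_nhdsGT ⟨0, h0⟩,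
    le_csInf (nonempty_Ioi.image _) h0, fun t ht => ?_⟩
  rcases ht.eq_or_lt with rfl | ht
  · simp [hf0]
  exact (le_div_iff₀ ht).1 (csInf_le ⟨0, h0⟩ (mem_image_of_mem _ ht))

end ConvexVanishingAtZero

/-- `A*(x)` and `A_*(x)` are the supremum of `sumsBelow A x` and the infimum of `sumsAbove A x`. -/
def sumsBelow (A : ℝ → ℝ) (x : ℝ) : Set ℝ :=
  {s | ∃ (k : ℕ) (c : Fin k → ℝ), 1 ≤ k ∧ (∀ j, 0 ≤ c j) ∧ (∑ j, c j) ≤ x ∧ s = ∑ j, A (c j)}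

def sumsAbove (A : ℝ → ℝ) (x : ℝ) : Set ℝ :=
  {s | ∃ (k : ℕ) (d : Fin k → ℝ), 1 ≤ k ∧ (∀ i, 0 ≤ d i) ∧ x ≤ (∑ i, d i) ∧ s = ∑ i, A (d i)}

section SuperTransform

variable {A Astar : ℝ → ℝ} {x t : ℝ}

lemma map_mem_sumsBelow (ht : 0 ≤ t) (htx : t ≤ x) : A t ∈ sumsBelow A x :=
  ⟨1, fun _ => t, le_rfl, fun _ => ht, by simpa using htx, by simp⟩

lemma sumsBelow_mono : Monotone (sumsBelow A) := by
  rintro x y hxy s ⟨k, c, hk, hc, hsum, rfl⟩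
  exact ⟨k, c, hk, hc, hsum.trans hxy, rfl⟩

lemma sumsBelow_zero (hA0 : A 0 = 0) : sumsBelow A 0 = {0} := by
  have hmem : A 0 ∈ sumsBelow A 0 := map_mem_sumsBelow le_rfl le_rfl
  rw [hA0] at hmem
  refine Subset.antisymm ?_ (singleton_subset_iff.2 hmem)
  rintro s ⟨k, c, -, hc, hsum, rfl⟩
  have hc0 (j : Fin k) : c j = 0 :=
    le_antisymm ((single_le_sum (fun i _ => hc i) (mem_univ j)).trans hsum) (hc j)
  simp [hc0, hA0]

lemma sum_sub_map_mem_sumsBelow (hA0 : A 0 = 0) {k : ℕ} {c : Fin k → ℝ} (hc : ∀ j, 0 ≤ c j)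
    (j₀ : Fin k) : ∑ j, A (c j) - A (c j₀) ∈ sumsBelow A (∑ j, c j - c j₀) := by
  classical
  have hsum (g : Fin k → ℝ) : ∑ j, Function.update g j₀ 0 j = ∑ j, g j - g j₀ := by
    rw [sum_update_of_mem (mem_univ _), sdiff_singleton_eq_erase, sum_erase_eq_sub (mem_univ _),
      zero_add]
  refine ⟨k, Function.update c j₀ 0, Fin.pos_iff_nonempty.2 ⟨j₀⟩, fun j => ?_, (hsum c).le, ?_⟩
  · rcases eq_or_ne j j₀ with rfl | h
    · simp
    · simpa [h] using hc j
  · simp only [Function.apply_update (fun _ => A) c j₀ 0, hA0, hsum]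

lemma le_of_isLUB_sumsBelow (hstar : ∀ x, 0 ≤ x → IsLUB (sumsBelow A x) (Astar x))
    (ht : 0 ≤ t) : A t ≤ Astar t :=
  (hstar t ht).1 (map_mem_sumsBelow ht le_rfl)

lemma eq_zero_of_isLUB_sumsBelow (hA0 : A 0 = 0)
    (hstar : ∀ x, 0 ≤ x → IsLUB (sumsBelow A x) (Astar x)) : Astar 0 = 0 :=
  (hstar 0 le_rfl).unique (sumsBelow_zero hA0 ▸ isLUB_singleton)

lemma monotoneOn_of_isLUB_sumsBelow (hstar : ∀ x, 0 ≤ x → IsLUB (sumsBelow A x) (Astar x)) :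
    MonotoneOn Astar (Ici 0) :=
  fun x hx y hy hxy => (hstar x hx).mono (hstar y hy) (sumsBelow_mono hxy)

lemma le_max_of_mem_sumsBelow (hA0 : A 0 = 0) (hmono : MonotoneOn A (Ici 0))
    (hstar : ∀ x, 0 ≤ x → IsLUB (sumsBelow A x) (Astar x)) (hconv : ConvexOn ℝ (Ici 0) Astar)
    {δ s : ℝ} (hδ : 0 < δ) (hs : s ∈ sumsBelow A x) :
    s ≤ max (max (Astar δ / δ * x) (A x + Astar δ)) (Astar δ + Astar (x - δ)) := by
  obtain ⟨k, c, hk, hc, hsum, rfl⟩ := hs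
  have hAstar0 := eq_zero_of_isLUB_sumsBelow hA0 hstar
  have hAstar_mono := monotoneOn_of_isLUB_sumsBelow hstar
  have : Nonempty (Fin k) := Fin.pos_iff_nonempty.1 hk
  obtain ⟨j₀, -, hj₀⟩ := exists_max_image univ c univ_nonempty
  set a := c j₀
  set b := ∑ j, c j - a
  have hb : 0 ≤ b := sub_nonneg.2 (single_le_sum (fun j _ => hc j) (mem_univ j₀))
  have hrest : ∑ j, A (c j) - A a ≤ Astar b :=
    (hstar b hb).1 (sum_sub_map_mem_sumsBelow hA0 hc j₀)
  rcases le_or_gt a δ with haδ | haδ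
  · refine le_max_of_le_left (le_max_of_le_left ?_)
    have hAstarδ : 0 ≤ Astar δ := hAstar0 ▸ hAstar_mono self_mem_Ici hδ.le hδ.le
    calc ∑ j, A (c j) ≤ ∑ j, Astar (c j) :=
          sum_le_sum fun j _ => le_of_isLUB_sumsBelow hstar (hc j)
      _ ≤ Astar δ / δ * ∑ j, c j := hconv.sum_map_le_div_mul_sum_of_map_zero hAstar0 hδ
          fun j _ => ⟨hc j, (hj₀ j (mem_univ j)).trans haδ⟩
      _ ≤ Astar δ / δ * x := mul_le_mul_of_nonneg_left hsum (div_nonneg hAstarδ hδ.le)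
  rcases le_or_gt b δ with hbδ | hbδ
  · refine le_max_of_le_left (le_max_of_le_right ?_)
    have hAa : A a ≤ A x := hmono (hc j₀) (show 0 ≤ x by linarith [hc j₀]) (by linarith)
    have hAstarb : Astar b ≤ Astar δ := hAstar_mono hb hδ.le hbδ
    linarith
  · refine le_max_of_le_right ?_
    have hAa : A a ≤ Astar a := le_of_isLUB_sumsBelow hstar (hc j₀)
    have hpair : Astar a + Astar b ≤ Astar δ + Astar (a + b - δ) :=
      hconv.map_add_map_le_map_add_map_sub hδ.le (show 0 ≤ a + b - δ by linarith) haδ.le hbδ.le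
    have hAstar_ab : Astar (a + b - δ) ≤ Astar (x - δ) :=
      hAstar_mono (show 0 ≤ a + b - δ by linarith) (show 0 ≤ x - δ by linarith) (by linarith)
    linarith

theorem eqOn_of_isLUB_sumsBelow_of_strictConvexOn (hA0 : A 0 = 0) (hmono : MonotoneOn A (Ici 0))
    (hstar : ∀ x, 0 ≤ x → IsLUB (sumsBelow A x) (Astar x))
    (hconv : StrictConvexOn ℝ (Ici 0) Astar) : EqOn Astar A (Ici 0) := by
  have hAstar0 := eq_zero_of_isLUB_sumsBelow hA0 hstar
  intro x (hx : 0 ≤ x)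
  rcases hx.eq_or_lt with rfl | hx
  · rw [hAstar0, hA0]
  refine le_antisymm (not_lt.1 fun hlt => ?_) (le_of_isLUB_sumsBelow hstar hx.le)
  obtain ⟨δ, hδ, hδx, hδsmall⟩ :=
    hconv.convexOn.exists_map_lt_of_map_zero hAstar0 hx (sub_pos.2 hlt)
  have hbound := (hstar x hx.le).2 fun s hs =>
    le_max_of_mem_sumsBelow hA0 hmono hstar hconv.convexOn hδ hs
  have hsmall_pieces : Astar δ / δ * x < Astar x := by
    calc Astar δ / δ * x < δ / x * Astar x / δ * x := by
          gcongr; exact hconv.map_lt_div_mul_of_map_zero hAstar0 hδ hδx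
      _ = Astar x := by field_simp
  exact hbound.not_gt (max_lt (max_lt hsmall_pieces (by linarith))
    (hconv.map_add_map_sub_lt_of_map_zero hAstar0 hδ hδx))

end SuperTransform

lemma isGLB_sumsAbove_mul {A : ℝ → ℝ} {c x : ℝ} (hA0 : A 0 = 0)
    (hlim : Tendsto (fun t => A t / t) (𝓝[>] 0) (𝓝 c)) (hc : 0 ≤ c)
    (hle : ∀ t, 0 ≤ t → c * t ≤ A t) (hx : 0 ≤ x) : IsGLB (sumsAbove A x) (c * x) := by
  refine ⟨?_, fun m hm => ?_⟩
  · rintro s ⟨k, d, -, hd, hsum, rfl⟩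
    calc c * x ≤ c * ∑ i, d i := mul_le_mul_of_nonneg_left hsum hc
      _ = ∑ i, c * d i := mul_sum _ _ _
      _ ≤ ∑ i, A (d i) := sum_le_sum fun i _ => hle _ (hd i)
  rcases hx.eq_or_lt with rfl | hx
  · simpa using hm (show (0 : ℝ) ∈ sumsAbove A 0 from
      ⟨1, fun _ => 0, le_rfl, fun _ => le_rfl, by simp, by simp [hA0]⟩)
  have hpieces (n : ℕ) (hn : 0 < n) : m ≤ x * (A (x / n) / (x / n)) := by
    have hn' : (0 : ℝ) < n := Nat.cast_pos.2 hn
    have hmem : n * A (x / n) ∈ sumsAbove A x :=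
      ⟨n, fun _ => x / n, hn, fun _ => by positivity, by simp [mul_div_cancel₀ _ hn'.ne'],
        by simp⟩
    calc m ≤ n * A (x / n) := hm hmem
      _ = x * (A (x / n) / (x / n)) := by field_simp
  have hseq : Tendsto (fun n : ℕ => x / n) atTop (𝓝[>] 0) :=
    tendsto_nhdsWithin_iff.2 ⟨tendsto_const_div_atTop_nhds_zero_nat x,
      (eventually_gt_atTop 0).mono fun n hn => div_pos hx (Nat.cast_pos.2 hn)⟩
  rw [mul_comm]
  exact ge_of_tendsto ((hlim.comp hseq).const_mul x) ((eventually_gt_atTop 0).mono hpieces)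

theorem subTransform_linear_of_strictConvex_superTransform_general
    (A Astar : ℝ → ℝ)
    (hA0 : A 0 = 0) (hmono : MonotoneOn A (Set.Ici 0))
    (hstar : ∀ x, 0 ≤ x →
      IsLUB {s : ℝ | ∃ (k : ℕ) (c : Fin k → ℝ), 1 ≤ k ∧ (∀ j, 0 ≤ c j) ∧
        (∑ j, c j) ≤ x ∧ s = ∑ j, A (c j)} (Astar x))
    (hconv : StrictConvexOn ℝ (Set.Ici 0) Astar) :
    ∃ c : ℝ, Filter.Tendsto (fun t => A t / t) (nhdsWithin 0 (Set.Ioi 0)) (nhds c) ∧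
      ∀ x, 0 ≤ x →
        IsGLB {s : ℝ | ∃ (k : ℕ) (d : Fin k → ℝ), 1 ≤ k ∧ (∀ i, 0 ≤ d i) ∧
          x ≤ (∑ i, d i) ∧ s = ∑ i, A (d i)} (c * x) := by
  have hAstar : EqOn Astar A (Ici 0) :=
    eqOn_of_isLUB_sumsBelow_of_strictConvexOn hA0 hmono hstar hconv
  have hA_nonneg (t : ℝ) (ht : 0 ≤ t) : 0 ≤ A t := hA0 ▸ hmono self_mem_Ici ht ht
  obtain ⟨c, hlim, hc, hle⟩ :=
    (hconv.convexOn.congr hAstar).exists_tendsto_div_of_map_zero hA0 hA_nonneg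
  exact ⟨c, hlim, fun x hx => isGLB_sumsAbove_mul hA0 hlim hc hle hx⟩

/-- If `A : [0,∞) → [0,∞)` is an aggregation function whose super-additive
transformation `A*` is finite and strictly convex, then the sub-additive transformation
satisfies `A_*(x) = c·x` with `c = lim_{t→0⁺} A t / t`. -/
theorem subTransform_linear_of_strictConvex_superTransform
    (A Astar : ℝ → ℝ)
    (hA0 : A 0 = 0) (hAnonneg : ∀ x, 0 ≤ x → 0 ≤ A x) (hmono : MonotoneOn A (Set.Ici 0))
    (hstar : ∀ x, 0 ≤ x →
      IsLUB {s : ℝ | ∃ (k : ℕ) (c : Fin k → ℝ), 1 ≤ k ∧ (∀ j, 0 ≤ c j) ∧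
        (∑ j, c j) ≤ x ∧ s = ∑ j, A (c j)} (Astar x))
    (hconv : StrictConvexOn ℝ (Set.Ici 0) Astar) :
    ∃ c : ℝ, Filter.Tendsto (fun t => A t / t) (nhdsWithin 0 (Set.Ioi 0)) (nhds c) ∧
      ∀ x, 0 ≤ x →
        IsGLB {s : ℝ | ∃ (k : ℕ) (d : Fin k → ℝ), 1 ≤ k ∧ (∀ i, 0 ≤ d i) ∧
          x ≤ (∑ i, d i) ∧ s = ∑ i, A (d i)} (c * x) :=
  subTransform_linear_of_strictConvex_superTransform_general A Astar hA0 hmono hstar hconv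
end

section
/- Let f, g : [0,∞) → [0,∞) satisfy f(0)=g(0)=0 and f ≤ g pointwise, with f strictly concave (and finite) and g super-additive but not linear. Then there exists no aggregation function A on [0,∞) such that A_* = f and A* = g. -/
/-!
A single piece shows `f ≤ A`, and `n` copies of `x / n` show `n f(x/n) ≤ g x`; as `f u / u`
decreases in `u`, every slope `f u / u` is at most every slope `g x / x`, so some constant `c`
satisfies `f u ≤ c u` and `c x ≤ g x`. Strict concavity makes splitting profitable for `f`: if
`y < x ≤ 3y/2` and a cover of `x` has all pieces below `y`, its pieces can be grouped into two
parts whose sums lie in `[x - y, y]`, so its `A`-value is at least `f (x - y) + f y > f x`. Hence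
covers nearly attaining `f x` have a piece of length at least `y`, giving `A y ≤ f x ≤ c x`;
letting `x ↓ y` yields `A ≤ c · id`, hence `g ≤ c · id`, and `g` is linear.
-/

open Set Filter Topology

section ConcaveRatio

variable {f : ℝ → ℝ}

lemma ConcaveOn.antitoneOn_div (hf : ConcaveOn ℝ (Ici 0) f) (hf0 : f 0 = 0) :
    AntitoneOn (fun x => f x / x) (Ioi 0) := by
  intro x hx y hy hxy
  have := hf.antitoneOn_slope_gt (x := 0) self_mem_Ici ⟨mem_Ici.2 (le_of_lt hx), hx⟩
    ⟨mem_Ici.2 (le_of_lt hy), hy⟩ hxy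
  simpa [slope_def_field, hf0] using this

lemma StrictConcaveOn.strictAntiOn_div (hf : StrictConcaveOn ℝ (Ici 0) f) (hf0 : f 0 = 0) :
    StrictAntiOn (fun x => f x / x) (Ioi 0) := by
  intro x hx y hy hxy
  have := hf.secant_strict_mono (a := 0) self_mem_Ici (mem_Ici.2 (le_of_lt hx))
    (mem_Ici.2 (le_of_lt hy)) (ne_of_gt hx) (ne_of_gt hy) hxy
  simpa [hf0] using this

lemma ConcaveOn.map_add_le_of_map_zero (hf : ConcaveOn ℝ (Ici 0) f) (hf0 : f 0 = 0)
    {a b : ℝ} (ha : 0 ≤ a) (hb : 0 ≤ b) : f (a + b) ≤ f a + f b := by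
  rcases ha.eq_or_lt with rfl | ha
  · simp [hf0]
  rcases hb.eq_or_lt with rfl | hb
  · simp [hf0]
  have hab : 0 < a + b := add_pos ha hb
  have hra := hf.antitoneOn_div hf0 ha hab (le_add_of_nonneg_right hb.le)
  have hrb := hf.antitoneOn_div hf0 hb hab (le_add_of_nonneg_left ha.le)
  calc f (a + b) = a * (f (a + b) / (a + b)) + b * (f (a + b) / (a + b)) := by field_simp
    _ ≤ a * (f a / a) + b * (f b / b) :=
      add_le_add (mul_le_mul_of_nonneg_left hra ha.le) (mul_le_mul_of_nonneg_left hrb hb.le)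
    _ = f a + f b := by field_simp

lemma StrictConcaveOn.map_add_lt_of_map_zero (hf : StrictConcaveOn ℝ (Ici 0) f) (hf0 : f 0 = 0)
    {a b : ℝ} (ha : 0 < a) (hb : 0 < b) : f (a + b) < f a + f b := by
  have hab : 0 < a + b := add_pos ha hb
  have hra := hf.strictAntiOn_div hf0 ha hab (lt_add_of_pos_right a hb)
  have hrb := hf.strictAntiOn_div hf0 hb hab (lt_add_of_pos_left b ha)
  calc f (a + b) = a * (f (a + b) / (a + b)) + b * (f (a + b) / (a + b)) := by field_simp
    _ < a * (f a / a) + b * (f b / b) :=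
      add_lt_add (mul_lt_mul_of_pos_left hra ha) (mul_lt_mul_of_pos_left hrb hb)
    _ = f a + f b := by field_simp

lemma ConcaveOn.map_sum_le_of_map_zero (hf : ConcaveOn ℝ (Ici 0) f) (hf0 : f 0 = 0)
    {ι : Type*} (s : Finset ι) {d : ι → ℝ} (hd : ∀ i, 0 ≤ d i) :
    f (∑ i ∈ s, d i) ≤ ∑ i ∈ s, f (d i) :=
  Finset.le_sum_of_subadditive_on_pred f (0 ≤ ·) hf0.le
    (fun _ _ => hf.map_add_le_of_map_zero hf0) (fun _ _ => add_nonneg) d fun i _ => hd i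

end ConcaveRatio

lemma ConcaveOn.map_add_map_le_of_mem_Icc {S : Set ℝ} {f : ℝ → ℝ} (hf : ConcaveOn ℝ S f)
    {a b x : ℝ} (ha : a ∈ S) (hb : b ∈ S) (hx : x ∈ Icc a b) :
    f a + f b ≤ f x + f (a + b - x) := by
  rcases hx.1.eq_or_lt with rfl | hax
  · simp
  have hba : 0 < b - a := by linarith [hx.2]
  set θ := (b - x) / (b - a)
  have hθ0 : 0 ≤ θ := div_nonneg (by linarith [hx.2]) hba.le
  have hθ1 : 0 ≤ 1 - θ := by rw [sub_nonneg, div_le_one hba]; linarith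
  have h1 := hf.2 ha hb hθ0 hθ1 (add_sub_cancel θ 1)
  have h2 := hf.2 ha hb hθ1 hθ0 (sub_add_cancel 1 θ)
  have e1 : θ * a + (1 - θ) * b = x := by simp only [θ]; field_simp; ring
  have e2 : (1 - θ) * a + θ * b = a + b - x := by simp only [θ]; field_simp; ring
  simp only [smul_eq_mul, e1, e2] at h1 h2
  linarith

lemma Finset.exists_sum_mem_Icc {ι : Type*} (d : ι → ℝ) {a b : ℝ} (ha : 0 ≤ a) (hab : 2 * a ≤ b)
    (hd : ∀ i, d i ≤ b) (s : Finset ι) (hs : a ≤ ∑ i ∈ s, d i) :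
    ∃ S : Finset ι, ∑ i ∈ S, d i ∈ Set.Icc a b := by
  induction s using Finset.cons_induction with
  | empty =>
    rw [Finset.sum_empty] at hs
    exact ⟨∅, by rw [Finset.sum_empty]; exact ⟨hs, by linarith⟩⟩
  | cons j s hj ih =>
    by_cases hsa : a ≤ ∑ i ∈ s, d i
    · exact ih hsa
    by_cases hja : a ≤ d j
    · exact ⟨{j}, by simpa using ⟨hja, hd j⟩⟩
    refine ⟨Finset.cons j s hj, hs, ?_⟩
    rw [Finset.sum_cons] at hs ⊢
    linarith

lemma exists_forall_le_mul_and_mul_le {f g : ℝ → ℝ}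
    (h : ∀ u x, 0 < u → 0 < x → f u / u ≤ g x / x) :
    ∃ c, (∀ u, 0 < u → f u ≤ c * u) ∧ ∀ x, 0 < x → c * x ≤ g x := by
  have hbdd : BddAbove ((fun u => f u / u) '' Ioi 0) :=
    ⟨g 1 / 1, forall_mem_image.2 fun u hu => h u 1 hu one_pos⟩
  refine ⟨sSup ((fun u => f u / u) '' Ioi 0), fun u hu => ?_, fun x hx => ?_⟩
  · exact (div_le_iff₀ hu).1 (le_csSup hbdd (mem_image_of_mem _ hu))
  · exact (le_div_iff₀ hx).1 <|
      csSup_le (nonempty_Ioi.image _) (forall_mem_image.2 fun u hu => h u x hu hx)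

lemma le_mul_of_forall_mem_Ioc {a c y δ : ℝ} (hδ : 0 < δ)
    (h : ∀ x ∈ Ioc y (y + δ), a ≤ c * x) : a ≤ c * y := by
  have hlim : Tendsto (fun x => c * x) (𝓝[>] y) (𝓝 (c * y)) :=
    ((continuous_const_mul c).tendsto y).mono_left nhdsWithin_le_nhds
  exact ge_of_tendsto hlim (eventually_of_mem (Ioc_mem_nhdsGT (by linarith)) h)

section Aggregation

/-- `A_* x` is the infimum of `coveringSums A x` and `A^* x` the supremum of `packingSums A x`. -/
def coveringSums (A : ℝ → ℝ) (x : ℝ) : Set ℝ :=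
  {s | ∃ (k : ℕ) (d : Fin k → ℝ), 1 ≤ k ∧ (∀ i, 0 ≤ d i) ∧ x ≤ (∑ i, d i) ∧ s = ∑ i, A (d i)}

def packingSums (A : ℝ → ℝ) (x : ℝ) : Set ℝ :=
  {s | ∃ (k : ℕ) (c : Fin k → ℝ), 1 ≤ k ∧ (∀ j, 0 ≤ c j) ∧ (∑ j, c j) ≤ x ∧ s = ∑ j, A (c j)}

variable {A f : ℝ → ℝ} {x : ℝ}

lemma le_of_isGLB_coveringSums {v : ℝ} (h : IsGLB (coveringSums A x) v) (hx : 0 ≤ x) :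
    v ≤ A x :=
  h.1 ⟨1, fun _ => x, le_rfl, fun _ => hx, by simp, by simp⟩

lemma natCast_mul_le_of_isLUB_packingSums {w : ℝ} (h : IsLUB (packingSums A x) w) {n : ℕ}
    (hn : 1 ≤ n) {y : ℝ} (hy : 0 ≤ y) (hnyx : n * y ≤ x) : n * A y ≤ w :=
  h.1 ⟨n, fun _ => y, hn, fun _ => hy, by simpa using hnyx, by simp⟩

lemma le_mul_of_isLUB_packingSums {c w : ℝ} (hA : ∀ y, 0 ≤ y → A y ≤ c * y) (hc : 0 ≤ c)
    (h : IsLUB (packingSums A x) w) : w ≤ c * x := by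
  refine h.2 ?_
  rintro _ ⟨k, d, -, hd, hdx, rfl⟩
  calc ∑ j, A (d j) ≤ ∑ j, c * d j := Finset.sum_le_sum fun j _ => hA _ (hd j)
    _ = c * ∑ j, d j := (Finset.mul_sum _ _ _).symm
    _ ≤ c * x := mul_le_mul_of_nonneg_left hdx hc

lemma div_le_div_of_isLUB_packingSums (hf : ConcaveOn ℝ (Ici 0) f) (hf0 : f 0 = 0)
    (hfA : ∀ y, 0 ≤ y → f y ≤ A y) {w u : ℝ} (h : IsLUB (packingSums A x) w) (hu : 0 < u)
    (hx : 0 < x) : f u / u ≤ w / x := by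
  obtain ⟨n, hn⟩ := exists_nat_gt (x / u)
  have hn0 : (0 : ℝ) < n := (div_pos hx hu).trans hn
  have hy : 0 < x / n := div_pos hx hn0
  have hyu : x / n ≤ u := by
    rw [div_lt_iff₀ hu] at hn
    rw [div_le_iff₀ hn0]
    linarith
  calc f u / u ≤ f (x / n) / (x / n) := hf.antitoneOn_div hf0 hy hu hyu
    _ = n * f (x / n) / x := by field_simp
    _ ≤ n * A (x / n) / x := by gcongr; exact hfA _ hy.le
    _ ≤ w / x := by
      gcongr
      exact natCast_mul_le_of_isLUB_packingSums h (by exact_mod_cast hn0) hy.le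
        (mul_div_cancel₀ x hn0.ne').le

section CoveringBound

variable (hf : ConcaveOn ℝ (Ici 0) f) (hf0 : f 0 = 0) (hfA : ∀ z, 0 ≤ z → f z ≤ A z)
  (hA : ∀ z, 0 ≤ z → 0 ≤ A z) (hAm : MonotoneOn A (Ici 0)) {y : ℝ} (hy : 0 < y) (hyx : y ≤ x)
  (hxy : 2 * x ≤ 3 * y)
include hf hf0 hfA hA hAm hy hyx hxy

lemma min_le_sum_of_sum_eq {ι : Type*} [Fintype ι] {d : ι → ℝ} (hd : ∀ i, 0 ≤ d i)
    (hsum : ∑ i, d i = x) : min (f (x - y) + f y) (A y) ≤ ∑ i, A (d i) := by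
  classical
  by_cases hbig : ∃ i, y ≤ d i
  · obtain ⟨i, hi⟩ := hbig
    calc min (f (x - y) + f y) (A y) ≤ A y := min_le_right _ _
      _ ≤ A (d i) := hAm hy.le (hd i) hi
      _ ≤ ∑ i, A (d i) := Finset.single_le_sum (fun j _ => hA _ (hd j)) (Finset.mem_univ i)
  push Not at hbig
  obtain ⟨S, hS⟩ := Finset.exists_sum_mem_Icc d (sub_nonneg.2 hyx) (by linarith)
    (fun i => (hbig i).le) Finset.univ (by rw [hsum]; linarith)
  have hcompl : x - y + y - ∑ i ∈ S, d i = ∑ i ∈ Sᶜ, d i := by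
    rw [← hsum, ← Finset.sum_add_sum_compl S d]; ring
  calc min (f (x - y) + f y) (A y) ≤ f (x - y) + f y := min_le_left _ _
    _ ≤ f (∑ i ∈ S, d i) + f (∑ i ∈ Sᶜ, d i) := by
      rw [← hcompl]
      exact hf.map_add_map_le_of_mem_Icc (mem_Ici.2 (sub_nonneg.2 hyx)) (mem_Ici.2 hy.le) hS
    _ ≤ ∑ i ∈ S, f (d i) + ∑ i ∈ Sᶜ, f (d i) :=
      add_le_add (hf.map_sum_le_of_map_zero hf0 S hd) (hf.map_sum_le_of_map_zero hf0 Sᶜ hd)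
    _ = ∑ i, f (d i) := Finset.sum_add_sum_compl S _
    _ ≤ ∑ i, A (d i) := Finset.sum_le_sum fun i _ => hfA _ (hd i)

lemma min_mem_lowerBounds_coveringSums :
    min (f (x - y) + f y) (A y) ∈ lowerBounds (coveringSums A x) := by
  rintro _ ⟨k, d, -, hd, hxd, rfl⟩
  have hpos : 0 < ∑ i, d i := (hy.trans_le hyx).trans_le hxd
  set θ := x / ∑ i, d i
  have hθ0 : 0 ≤ θ := div_nonneg (hy.le.trans hyx) hpos.le
  have hθ1 : θ ≤ 1 := div_le_one_of_le₀ hxd hpos.le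
  have hθd : ∀ i, 0 ≤ θ * d i := fun i => mul_nonneg hθ0 (hd i)
  calc min (f (x - y) + f y) (A y) ≤ ∑ i, A (θ * d i) :=
        min_le_sum_of_sum_eq hf hf0 hfA hA hAm hy hyx hxy hθd
          (by rw [← Finset.mul_sum]; exact div_mul_cancel₀ _ hpos.ne')
    _ ≤ ∑ i, A (d i) := Finset.sum_le_sum fun i _ =>
        hAm (hθd i) (hd i) (mul_le_of_le_one_left (hd i) hθ1)

end CoveringBound

lemma apply_le_of_isGLB_coveringSums (hf : StrictConcaveOn ℝ (Ici 0) f) (hf0 : f 0 = 0)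
    (hfA : ∀ z, 0 ≤ z → f z ≤ A z) (hA : ∀ z, 0 ≤ z → 0 ≤ A z) (hAm : MonotoneOn A (Ici 0))
    (h : IsGLB (coveringSums A x) (f x)) {y : ℝ} (hy : 0 < y) (hyx : y < x)
    (hxy : 2 * x ≤ 3 * y) : A y ≤ f x := by
  have hsplit : f x < f (x - y) + f y := by
    simpa using hf.map_add_lt_of_map_zero hf0 (sub_pos.2 hyx) hy
  have hmin := h.2 (min_mem_lowerBounds_coveringSums hf.concaveOn hf0 hfA hA hAm hy hyx.le hxy)
  exact (min_le_iff.1 hmin).resolve_left (not_le.2 hsplit)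

end Aggregation

theorem no_aggregation_with_prescribed_transforms_concave_general
    (f g : ℝ → ℝ)
    (hf0 : f 0 = 0) (hg0 : g 0 = 0)
    (hfconc : StrictConcaveOn ℝ (Set.Ici 0) f)
    (hgnotlin : ¬ ∃ c : ℝ, ∀ x, 0 ≤ x → g x = c * x) :
    ¬ ∃ A : ℝ → ℝ, (∀ x, 0 ≤ x → 0 ≤ A x) ∧ A 0 = 0 ∧ MonotoneOn A (Set.Ici 0) ∧
      (∀ x, 0 ≤ x →
        IsGLB {s : ℝ | ∃ (k : ℕ) (d : Fin k → ℝ), 1 ≤ k ∧ (∀ i, 0 ≤ d i) ∧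
          x ≤ (∑ i, d i) ∧ s = ∑ i, A (d i)} (f x)) ∧
      (∀ x, 0 ≤ x →
        IsLUB {s : ℝ | ∃ (k : ℕ) (c : Fin k → ℝ), 1 ≤ k ∧ (∀ j, 0 ≤ c j) ∧
          (∑ j, c j) ≤ x ∧ s = ∑ j, A (c j)} (g x)) := by
  rintro ⟨A, hA, hA0, hAm, hglb, hlub⟩
  have hfA : ∀ y, 0 ≤ y → f y ≤ A y := fun y hy => le_of_isGLB_coveringSums (hglb y hy) hy
  obtain ⟨c, hfc, hcg⟩ := exists_forall_le_mul_and_mul_le fun u x hu hx =>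
    div_le_div_of_isLUB_packingSums hfconc.concaveOn hf0 hfA (hlub x hx.le) hu hx
  have hAc : ∀ y, 0 ≤ y → A y ≤ c * y := by
    intro y hy
    rcases hy.eq_or_lt with rfl | hy
    · simp [hA0]
    refine le_mul_of_forall_mem_Ioc (half_pos hy) fun x hx => ?_
    have hx0 : 0 < x := hy.trans hx.1
    exact (apply_le_of_isGLB_coveringSums hfconc hf0 hfA hA hAm (hglb x hx0.le) hy hx.1
      (by linarith [hx.2])).trans (hfc x hx0)
  have hc : 0 ≤ c := by simpa using (hA 1 zero_le_one).trans (hAc 1 zero_le_one)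
  refine hgnotlin ⟨c, fun x hx => (le_mul_of_isLUB_packingSums hAc hc (hlub x hx)).antisymm ?_⟩
  rcases hx.eq_or_lt with rfl | hx
  · simp [hg0]
  · exact hcg x hx

/-- If `f, g : [0,∞) → [0,∞)` satisfy `f 0 = g 0 = 0`, `f ≤ g` pointwise,
`f` strictly concave (and finite) and `g` super-additive but not linear, then there is no
aggregation function `A` on `[0,∞)` with `A_* = f` and `A* = g`. -/
theorem no_aggregation_with_prescribed_transforms_concave
    (f g : ℝ → ℝ)
    (hfnonneg : ∀ x, 0 ≤ x → 0 ≤ f x) (hgnonneg : ∀ x, 0 ≤ x → 0 ≤ g x)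
    (hf0 : f 0 = 0) (hg0 : g 0 = 0) (hfg : ∀ x, 0 ≤ x → f x ≤ g x)
    (hfconc : StrictConcaveOn ℝ (Set.Ici 0) f)
    (hgsuper : ∀ x y : ℝ, 0 ≤ x → 0 ≤ y → g x + g y ≤ g (x + y))
    (hgnotlin : ¬ ∃ c : ℝ, ∀ x, 0 ≤ x → g x = c * x) :
    ¬ ∃ A : ℝ → ℝ, (∀ x, 0 ≤ x → 0 ≤ A x) ∧ A 0 = 0 ∧ MonotoneOn A (Set.Ici 0) ∧
      (∀ x, 0 ≤ x →
        IsGLB {s : ℝ | ∃ (k : ℕ) (d : Fin k → ℝ), 1 ≤ k ∧ (∀ i, 0 ≤ d i) ∧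
          x ≤ (∑ i, d i) ∧ s = ∑ i, A (d i)} (f x)) ∧
      (∀ x, 0 ≤ x →
        IsLUB {s : ℝ | ∃ (k : ℕ) (c : Fin k → ℝ), 1 ≤ k ∧ (∀ j, 0 ≤ c j) ∧
          (∑ j, c j) ≤ x ∧ s = ∑ j, A (c j)} (g x)) :=
  no_aggregation_with_prescribed_transforms_concave_general f g hf0 hg0 hfconc hgnotlin
end

section
/- Let f, g : [0,∞) → [0,∞) satisfy f(0)=g(0)=0 and f ≤ g pointwise, with f sub-additive but not linear and g strictly convex (and finite). Then there exists no aggregation function A on [0,∞) such that A_* = f and A* = g. -/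
section Aux
variable {g : ℝ → ℝ}

lemma aux_slope (hc : ConvexOn ℝ (Set.Ici 0) g) (hg0 : g 0 = 0)
    {a b : ℝ} (ha : 0 < a) (hab : a ≤ b) : g a ≤ a / b * g b := by
  have hb : 0 < b := lt_of_lt_of_le ha hab
  have hw1 : (0:ℝ) ≤ a / b := by positivity
  have hw2 : (0:ℝ) ≤ 1 - a / b := by
    have : a / b ≤ 1 := (div_le_one hb).2 hab
    linarith
  have h := hc.2 (Set.mem_Ici.2 hb.le) (Set.mem_Ici.2 (le_refl (0:ℝ))) hw1 hw2 (by ring)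
  simp only [smul_eq_mul, mul_zero, add_zero, hg0] at h
  rwa [div_mul_cancel₀ _ hb.ne'] at h

lemma aux_slope_strict (hc : StrictConvexOn ℝ (Set.Ici 0) g) (hg0 : g 0 = 0)
    {a b : ℝ} (ha : 0 < a) (hab : a < b) : g a < a / b * g b := by
  have hb : 0 < b := lt_trans ha hab
  have hw1 : (0:ℝ) < a / b := by positivity
  have hw2 : (0:ℝ) < 1 - a / b := by
    have : a / b < 1 := (div_lt_one hb).2 hab
    linarith
  have h := hc.2 (Set.mem_Ici.2 hb.le) (Set.mem_Ici.2 (le_refl (0:ℝ))) hb.ne' hw1 hw2 (by ring)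
  simp only [smul_eq_mul, mul_zero, add_zero, hg0] at h
  rwa [div_mul_cancel₀ _ hb.ne'] at h

lemma aux_superadd (hc : ConvexOn ℝ (Set.Ici 0) g) (hg0 : g 0 = 0)
    {a b : ℝ} (ha : 0 ≤ a) (hb : 0 ≤ b) : g a + g b ≤ g (a + b) := by
  rcases eq_or_lt_of_le ha with rfl | ha'
  · simp [hg0]
  rcases eq_or_lt_of_le hb with rfl | hb'
  · simp [hg0]
  have h1 : g a ≤ a / (a + b) * g (a + b) := aux_slope hc hg0 ha' (by linarith)
  have h2 : g b ≤ b / (a + b) * g (a + b) := aux_slope hc hg0 hb' (by linarith)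
  have hab : (0:ℝ) < a + b := by linarith
  have : a / (a + b) * g (a + b) + b / (a + b) * g (a + b) = g (a + b) := by
    field_simp
  linarith

lemma aux_gmono (hc : ConvexOn ℝ (Set.Ici 0) g) (hg0 : g 0 = 0)
    (hgnn : ∀ x, 0 ≤ x → 0 ≤ g x)
    {a b : ℝ} (ha : 0 ≤ a) (hab : a ≤ b) : g a ≤ g b := by
  have h := aux_superadd hc hg0 ha (by linarith : (0:ℝ) ≤ b - a)
  have h2 := hgnn (b - a) (by linarith)
  have : a + (b - a) = b := by ring
  rw [this] at h
  linarith

lemma aux_sum_superadd (hc : ConvexOn ℝ (Set.Ici 0) g) (hg0 : g 0 = 0)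
    {ι : Type*} (s : Finset ι) (c : ι → ℝ) (hcn : ∀ i ∈ s, 0 ≤ c i) :
    ∑ i ∈ s, g (c i) ≤ g (∑ i ∈ s, c i) := by
  classical
  induction s using Finset.cons_induction with
  | empty => simp [hg0]
  | cons a s has ih =>
    rw [Finset.sum_cons, Finset.sum_cons]
    have h1 : ∑ i ∈ s, g (c i) ≤ g (∑ i ∈ s, c i) :=
      ih (fun i hi => hcn i (Finset.mem_cons_of_mem hi))
    have h2 : g (c a) + g (∑ i ∈ s, c i) ≤ g (c a + ∑ i ∈ s, c i) :=
      aux_superadd hc hg0 (hcn a (Finset.mem_cons_self a s))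
        (Finset.sum_nonneg (fun i hi => hcn i (Finset.mem_cons_of_mem hi)))
    linarith

end Aux

/-- If `f, g : [0,∞) → [0,∞)` satisfy `f 0 = g 0 = 0`, `f ≤ g` pointwise,
`f` sub-additive but not linear and `g` strictly convex (and finite), then there is no
aggregation function `A` on `[0,∞)` with `A_* = f` and `A* = g`. -/
theorem no_aggregation_with_prescribed_transforms_convex
    (f g : ℝ → ℝ)
    (hfnonneg : ∀ x, 0 ≤ x → 0 ≤ f x) (hgnonneg : ∀ x, 0 ≤ x → 0 ≤ g x)
    (hf0 : f 0 = 0) (hg0 : g 0 = 0) (hfg : ∀ x, 0 ≤ x → f x ≤ g x)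
    (hfsub : ∀ x y : ℝ, 0 ≤ x → 0 ≤ y → f (x + y) ≤ f x + f y)
    (hfnotlin : ¬ ∃ c : ℝ, ∀ x, 0 ≤ x → f x = c * x)
    (hgconv : StrictConvexOn ℝ (Set.Ici 0) g) :
    ¬ ∃ A : ℝ → ℝ, (∀ x, 0 ≤ x → 0 ≤ A x) ∧ A 0 = 0 ∧ MonotoneOn A (Set.Ici 0) ∧
      (∀ x, 0 ≤ x →
        IsGLB {s : ℝ | ∃ (k : ℕ) (d : Fin k → ℝ), 1 ≤ k ∧ (∀ i, 0 ≤ d i) ∧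
          x ≤ (∑ i, d i) ∧ s = ∑ i, A (d i)} (f x)) ∧
      (∀ x, 0 ≤ x →
        IsLUB {s : ℝ | ∃ (k : ℕ) (c : Fin k → ℝ), 1 ≤ k ∧ (∀ j, 0 ≤ c j) ∧
          (∑ j, c j) ≤ x ∧ s = ∑ j, A (c j)} (g x)) := by
  rintro ⟨A, hAnn, hA0, hAmono, hglb, hlub⟩
  have hc : ConvexOn ℝ (Set.Ici 0) g := hgconv.convexOn
  -- A ≤ g
  have hAg : ∀ x, 0 ≤ x → A x ≤ g x := by
    intro x hx
    refine (hlub x hx).1 ?_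
    exact ⟨1, fun _ => x, le_refl 1, fun _ => hx, by simp, by simp⟩
  -- g ≤ A
  have hgA : ∀ x, 0 ≤ x → g x ≤ A x := by
    intro x hx
    rcases eq_or_lt_of_le hx with rfl | hx'
    · simp [hg0, hA0]
    by_contra hlt
    push_neg at hlt
    -- for each 0 < δ ≤ x/2, g x ≤ A x + g δ
    have key : ∀ δ : ℝ, 0 < δ → δ ≤ x / 2 → g x ≤ A x + g δ := by
      intro δ hδ hδx
      have hxδ : 0 < x - δ := by linarith
      have hub : ∀ s ∈ {s : ℝ | ∃ (k : ℕ) (c : Fin k → ℝ), 1 ≤ k ∧ (∀ j, 0 ≤ c j) ∧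
          (∑ j, c j) ≤ x ∧ s = ∑ j, A (c j)},
          s ≤ max (A x + g δ) (x * (g (x - δ) / (x - δ))) := by
        rintro s ⟨k, c, hk, hcn, hcs, rfl⟩
        by_cases hbig : ∃ j, x - δ ≤ c j
        · -- one big piece
          obtain ⟨j0, hj0⟩ := hbig
          refine le_trans ?_ (le_max_left _ _)
          have hsplit : ∑ j, A (c j)
              = A (c j0) + ∑ j ∈ Finset.univ.erase j0, A (c j) := by
            exact (Finset.add_sum_erase _ _ (Finset.mem_univ j0)).symm
          have hcj0x : c j0 ≤ x := by
            refine le_trans ?_ hcs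
            exact Finset.single_le_sum (fun i _ => hcn i) (Finset.mem_univ j0)
          have h1 : A (c j0) ≤ A x :=
            hAmono (Set.mem_Ici.2 (hcn j0)) (Set.mem_Ici.2 hx) hcj0x
          have h2 : ∑ j ∈ Finset.univ.erase j0, A (c j)
              ≤ ∑ j ∈ Finset.univ.erase j0, g (c j) :=
            Finset.sum_le_sum (fun i _ => hAg (c i) (hcn i))
          have h3 : ∑ j ∈ Finset.univ.erase j0, g (c j)
              ≤ g (∑ j ∈ Finset.univ.erase j0, c j) :=
            aux_sum_superadd hc hg0 _ _ (fun i _ => hcn i)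
          have hrest : ∑ j ∈ Finset.univ.erase j0, c j ≤ δ := by
            have : c j0 + ∑ j ∈ Finset.univ.erase j0, c j = ∑ j, c j :=
              Finset.add_sum_erase _ _ (Finset.mem_univ j0)
            linarith [hj0]
          have h4 : g (∑ j ∈ Finset.univ.erase j0, c j) ≤ g δ :=
            aux_gmono hc hg0 hgnonneg
              (Finset.sum_nonneg (fun i _ => hcn i)) hrest
          rw [hsplit]
          linarith
        · -- all pieces small
          push_neg at hbig
          refine le_trans ?_ (le_max_right _ _)
          have hR : 0 ≤ g (x - δ) / (x - δ) := by
            have := hgnonneg (x - δ) hxδ.le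
            positivity
          have hterm : ∀ j, A (c j) ≤ c j * (g (x - δ) / (x - δ)) := by
            intro j
            rcases eq_or_lt_of_le (hcn j) with h0 | hpos
            · rw [← h0]; simp [hA0]
            · refine le_trans (hAg (c j) (hcn j)) ?_
              have := aux_slope hc hg0 hpos (le_of_lt (hbig j))
              calc g (c j) ≤ c j / (x - δ) * g (x - δ) := this
                _ = c j * (g (x - δ) / (x - δ)) := by ring
          calc ∑ j, A (c j) ≤ ∑ j, c j * (g (x - δ) / (x - δ)) :=
                Finset.sum_le_sum (fun i _ => hterm i)
            _ = (∑ j, c j) * (g (x - δ) / (x - δ)) := by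
                rw [Finset.sum_mul]
            _ ≤ x * (g (x - δ) / (x - δ)) := by
                exact mul_le_mul_of_nonneg_right hcs hR
      have hle : g x ≤ max (A x + g δ) (x * (g (x - δ) / (x - δ))) :=
        (hlub x hx).2 hub
      have hstrict : x * (g (x - δ) / (x - δ)) < g x := by
        have h := aux_slope_strict hgconv hg0 hxδ (by linarith : x - δ < x)
        have hdc : (x - δ) / x * g x * x = (x - δ) * g x := by field_simp
        have h2 : g (x - δ) / (x - δ) < g x / x := by
          rw [div_lt_div_iff₀ hxδ hx']
          have := mul_lt_mul_of_pos_right h hx'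
          linarith
        have h3 : x * (g (x - δ) / (x - δ)) < x * (g x / x) :=
          mul_lt_mul_of_pos_left h2 hx'
        have h4 : x * (g x / x) = g x := by field_simp
        linarith
      rcases le_max_iff.1 hle with h | h
      · exact h
      · linarith
    -- choose δ small
    set t := x / 2 with ht
    have htpos : 0 < t := by positivity
    set M := g t / t with hM
    have hMnn : 0 ≤ M := by
      have := hgnonneg t htpos.le
      positivity
    set ε := g x - A x with hε
    have hεpos : 0 < ε := by simpa [hε] using sub_pos.2 hlt
    set δ := min t (ε / (2 * (M + 1))) with hδdef
    have hδpos : 0 < δ := lt_min htpos (by positivity)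
    have hδt : δ ≤ t := min_le_left _ _
    have hgδ : g δ ≤ δ * M := by
      rcases eq_or_lt_of_le hδt with heq | hlt'
      · rw [heq, hM]
        have : t * (g t / t) = g t := by field_simp
        rw [this]
      · have := aux_slope hc hg0 hδpos hδt
        calc g δ ≤ δ / t * g t := this
          _ = δ * (g t / t) := by ring
    have hδsmall : δ * M < ε := by
      have h1 : δ ≤ ε / (2 * (M + 1)) := min_le_right _ _
      have h2 : δ * M ≤ ε / (2 * (M + 1)) * M :=
        mul_le_mul_of_nonneg_right h1 hMnn
      have h3 : ε / (2 * (M + 1)) * M < ε := by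
        rw [div_mul_eq_mul_div, div_lt_iff₀ (by positivity : (0:ℝ) < 2 * (M + 1))]
        nlinarith
      linarith
    have := key δ hδpos hδt
    linarith [hgδ]
  -- hence A = g on [0,∞)
  have hAeq : ∀ x, 0 ≤ x → A x = g x := fun x hx => le_antisymm (hAg x hx) (hgA x hx)
  -- the slope set and its infimum
  set S : Set ℝ := (fun t => g t / t) '' Set.Ioi (0:ℝ) with hS
  have hSne : S.Nonempty := ⟨g 1 / 1, ⟨1, Set.mem_Ioi.2 one_pos, rfl⟩⟩
  have hSbdd : BddBelow S := by
    refine ⟨0, ?_⟩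
    rintro r ⟨t, ht, rfl⟩
    exact div_nonneg (hgnonneg t (le_of_lt (Set.mem_Ioi.1 ht))) (le_of_lt (Set.mem_Ioi.1 ht))
  set L := sInf S with hL
  have hLnn : 0 ≤ L := le_csInf hSne (by
    rintro r ⟨t, ht, rfl⟩
    exact div_nonneg (hgnonneg t (le_of_lt (Set.mem_Ioi.1 ht))) (le_of_lt (Set.mem_Ioi.1 ht)))
  have hLle : ∀ t : ℝ, 0 < t → L ≤ g t / t := fun t ht =>
    csInf_le hSbdd ⟨t, Set.mem_Ioi.2 ht, rfl⟩
  -- f x = L * x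
  refine hfnotlin ⟨L, fun x hx => ?_⟩
  rcases eq_or_lt_of_le hx with rfl | hx'
  · simp [hf0]
  refine le_antisymm ?_ ?_
  · -- f x ≤ L * x
    have hfdiv : ∀ t : ℝ, 0 < t → f x ≤ x * (g t / t) := by
      intro t ht
      set n : ℕ := max 1 ⌈x / t⌉₊ with hn
      have hn1 : 1 ≤ n := le_max_left _ _
      have hnpos : (0:ℝ) < n := by
        have : (1:ℕ) ≤ n := hn1
        exact_mod_cast Nat.lt_of_lt_of_le Nat.zero_lt_one this
      have hxn : 0 < x / n := by positivity
      have hxnt : x / n ≤ t := by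
        have h1 : x / t ≤ (⌈x / t⌉₊ : ℝ) := Nat.le_ceil _
        have h2 : (⌈x / t⌉₊ : ℝ) ≤ n := by
          exact_mod_cast le_max_right 1 ⌈x / t⌉₊
        rw [div_le_iff₀ hnpos] at *
        calc x ≤ (⌈x / t⌉₊ : ℝ) * t := by
              rw [div_le_iff₀ ht] at h1; linarith
          _ ≤ (n:ℝ) * t := by nlinarith [ht.le]
          _ = t * n := by ring
      have hmem : (n:ℝ) * A (x / n) ∈ {s : ℝ | ∃ (k : ℕ) (d : Fin k → ℝ), 1 ≤ k ∧
          (∀ i, 0 ≤ d i) ∧ x ≤ (∑ i, d i) ∧ s = ∑ i, A (d i)} := by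
        refine ⟨n, fun _ => x / n, hn1, fun _ => hxn.le, ?_, ?_⟩
        · rw [Finset.sum_const, Finset.card_univ, Fintype.card_fin, nsmul_eq_mul]
          rw [mul_div_cancel₀ _ hnpos.ne']
        · rw [Finset.sum_const, Finset.card_univ, Fintype.card_fin, nsmul_eq_mul]
      have h1 : f x ≤ (n:ℝ) * A (x / n) := (hglb x hx).1 hmem
      have h2 : A (x / n) = g (x / n) := hAeq _ hxn.le
      have h3 : g (x / n) ≤ (x / n) / t * g t := aux_slope hc hg0 hxn hxnt
      have h4 : (n:ℝ) * ((x / n) / t * g t) = x * (g t / t) := by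
        field_simp
      calc f x ≤ (n:ℝ) * A (x / n) := h1
        _ = (n:ℝ) * g (x / n) := by rw [h2]
        _ ≤ (n:ℝ) * ((x / n) / t * g t) := by
            exact mul_le_mul_of_nonneg_left h3 hnpos.le
        _ = x * (g t / t) := h4
    have : f x / x ≤ L := by
      refine le_csInf hSne ?_
      rintro r ⟨t, ht, rfl⟩
      rw [div_le_iff₀ hx']
      calc f x ≤ x * (g t / t) := hfdiv t ht
        _ = g t / t * x := by ring
    calc f x = f x / x * x := by field_simp
      _ ≤ L * x := mul_le_mul_of_nonneg_right this hx
  · -- L * x ≤ f x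
    refine (hglb x hx).2 ?_
    rintro s ⟨k, d, hk, hdn, hds, rfl⟩
    have hterm : ∀ i, L * d i ≤ A (d i) := by
      intro i
      rcases eq_or_lt_of_le (hdn i) with h0 | hpos
      · rw [← h0]; simp [hA0]
      · rw [hAeq _ (hdn i)]
        have := hLle (d i) hpos
        rw [le_div_iff₀ hpos] at this
        linarith
    calc L * x ≤ L * ∑ i, d i := mul_le_mul_of_nonneg_left hds hLnn
      _ = ∑ i, L * d i := by rw [Finset.mul_sum]
      _ ≤ ∑ i, A (d i) := Finset.sum_le_sum (fun i _ => hterm i)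
end

section
/- Let A : [0,∞)^n → [0,∞) be an aggregation function such that A* is finite-valued and strictly directionally convex. Then A(x) = A*(x) for every x ∈ [0,∞)^n. -/
/-!
Suppose `A x < A* x`. By superadditivity `A*` is small on `t • x` for small `t > 0`. Take a
decomposition `c` of `x`. If all pieces but one sum to at most `t • x`, its value is at most
`A x + A* (t • x)`, well below `A* x`. Otherwise the pieces split into two groups `G`, `Gᶜ`
each of which dominates a positive multiple of a coordinate vector. Strict directional convexity
makes the superadditivity gap `A* (p + q) - A* p - A* q` positive at such vectors, and
directional convexity makes the gap monotone in `p` and `q`, so the value is at most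
`A* x - γ` for a uniform `γ > 0`. Either way `A* x` is not the least upper bound.
-/

open scoped NNReal Topology
open Finset Filter

theorem NNReal.add_le_of_isLUB {S : Set ℝ≥0} {a t c : ℝ≥0} (ha : IsLUB S a) (hS : S.Nonempty)
    (h : ∀ s ∈ S, s + t ≤ c) : a + t ≤ c := by
  obtain ⟨s, hs⟩ := hS
  have htc : t ≤ c := le_add_self.trans (h s hs)
  exact (le_tsub_iff_right htc).1 (ha.2 fun s hs => le_tsub_of_add_le_right (h s hs))

theorem Pi.single_le_of_le {ι α : Type*} [DecidableEq ι] [AddZeroClass α] [PartialOrder α]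
    [CanonicallyOrderedAdd α] {y : ι → α} {i : ι} {r : α} (h : r ≤ y i) : Pi.single i r ≤ y := by
  intro l
  rcases eq_or_ne l i with rfl | hl <;> simp [*]

theorem Finset.exists_subset_lt_sum_le {κ : Type*} [DecidableEq κ] (s : Finset κ)
    (b : κ → ℝ≥0) {t m : ℝ≥0} (hb : ∀ j ∈ s, b j ≤ m) (ht : t < ∑ j ∈ s, b j) :
    ∃ G ⊆ s, t < ∑ j ∈ G, b j ∧ ∑ j ∈ G, b j ≤ t + m := by
  induction s using Finset.induction_on with
  | empty => simp at ht
  | insert j s hj ih =>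
    by_cases hs : t < ∑ l ∈ s, b l
    · obtain ⟨G, hG, hlt, hle⟩ := ih (fun l hl => hb l (mem_insert_of_mem hl)) hs
      exact ⟨G, hG.trans (subset_insert j s), hlt, hle⟩
    · refine ⟨insert j s, Subset.rfl, ht, ?_⟩
      rw [sum_insert hj, add_comm t]
      exact add_le_add (hb j (mem_insert_self j s)) (not_lt.1 hs)

theorem exists_finset_lt_sum_apply_lt_sum_compl_apply {ι κ : Type*} [Fintype κ] [DecidableEq κ]
    [Nonempty κ] (c : κ → ι → ℝ≥0) {a z : ι → ℝ≥0} (ha : ∀ i, 3 * a i ≤ z i)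
    (h : ∀ j, ¬ ∑ l ∈ {j}ᶜ, c l ≤ z) :
    ∃ (G : Finset κ) (i i' : ι), a i < (∑ l ∈ G, c l) i ∧ a i' < (∑ l ∈ Gᶜ, c l) i' := by
  have hcompl : ∀ j, ∃ i, 3 * a i < (∑ l ∈ {j}ᶜ, c l) i := fun j => by
    obtain ⟨i, hi⟩ : ∃ i, z i < (∑ l ∈ {j}ᶜ, c l) i := by
      simpa only [Pi.le_def, not_forall, not_le] using h j
    exact ⟨i, (ha i).trans_lt hi⟩
  by_cases hsmall : ∀ j i, c j i ≤ a i
  · obtain ⟨j⟩ := ‹Nonempty κ›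
    obtain ⟨i, hi⟩ := hcompl j
    have htotal : 3 * a i < ∑ l, c l i := by
      refine hi.trans_le ?_
      rw [Finset.sum_apply]
      exact sum_le_sum_of_subset (subset_univ _)
    obtain ⟨G, -, hlt, hle⟩ := exists_subset_lt_sum_le univ (fun l => c l i) (t := a i)
      (fun l _ => hsmall l i) (lt_of_le_of_lt (by linarith) htotal)
    refine ⟨G, i, i, by rwa [Finset.sum_apply], ?_⟩
    rw [← sum_add_sum_compl G] at htotal
    rw [Finset.sum_apply]
    linarith
  · simp only [not_forall, not_le] at hsmall
    obtain ⟨j, i, hi⟩ := hsmall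
    obtain ⟨i', hi'⟩ := hcompl j
    refine ⟨{j}, i, i', by simpa using hi, lt_of_le_of_lt ?_ hi'⟩
    linarith [(zero_le : 0 ≤ a i')]

namespace AggregationFunction

variable {M : Type*} [AddCommMonoid M] [PartialOrder M]

def decompositionSums (A : M → ℝ≥0) (x : M) : Set ℝ≥0 :=
  {s : ℝ≥0 | ∃ (k : ℕ) (c : Fin k → M), 1 ≤ k ∧ (∑ j, c j) ≤ x ∧ s = ∑ j, A (c j)}

def IsSuperTransform (A F : M → ℝ≥0) : Prop :=
  ∀ x, IsLUB (decompositionSums A x) (F x)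

def StrictDirectionallyConvex (F : M → ℝ≥0) : Prop :=
  ∀ u v x y : M, u < x → u < y → x < v → y < v → u + v = x + y → F x + F y < F u + F v

namespace StrictDirectionallyConvex

variable [IsOrderedCancelAddMonoid M] {F : M → ℝ≥0} (hconv : StrictDirectionallyConvex F)
include hconv

theorem add_lt_map_add (h0 : F 0 = 0) {p q : M} (hp : 0 < p) (hq : 0 < q) :
    F p + F q < F (p + q) := by
  simpa [h0] using hconv 0 (p + q) p q hp hq (lt_add_of_pos_right p hq)
    (lt_add_of_pos_left q hp) (zero_add _)

variable [CanonicallyOrderedAdd M]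

theorem map_add_add_le {a b : M} (hab : a ≤ b) (h : M) :
    F (a + h) + F b ≤ F a + F (b + h) := by
  rcases eq_or_ne h 0 with rfl | hh
  · simp
  rcases hab.eq_or_lt with rfl | hab
  · rw [add_comm]
  have hpos : 0 < h := pos_iff_ne_zero.2 hh
  exact (hconv a (b + h) (a + h) b (lt_add_of_pos_right a hpos) hab (add_lt_add_left hab h)
    (lt_add_of_pos_right b hpos) (by abel)).le

theorem add_le_map_add_of_le {a b a' b' : M} {γ : ℝ≥0} (hgap : F a + F b + γ ≤ F (a + b))
    (ha : a ≤ a') (hb : b ≤ b') : F a' + F b' + γ ≤ F (a' + b') := by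
  obtain ⟨u, rfl⟩ := exists_add_of_le ha
  obtain ⟨v, rfl⟩ := exists_add_of_le hb
  have h₁ := hconv.map_add_add_le (le_self_add.trans le_self_add : a ≤ a + b + v) u
  have h₂ := hconv.map_add_add_le (le_add_self : b ≤ a + b) v
  rw [show a + b + v + u = a + u + (b + v) by abel] at h₁
  linarith

end StrictDirectionallyConvex

theorem decompositionSums_nonempty [CanonicallyOrderedAdd M] (A : M → ℝ≥0) (x : M) :
    (decompositionSums A x).Nonempty :=
  ⟨_, 1, fun _ => 0, le_rfl, by simp, rfl⟩

namespace IsSuperTransform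

variable {A F : M → ℝ≥0} (hF : IsSuperTransform A F)
include hF

theorem sum_le {β : Type*} (s : Finset β) (c : β → M) :
    ∑ i ∈ s, A (c i) ≤ F (∑ i ∈ s, c i) := by
  rcases s.eq_empty_or_nonempty with rfl | hs
  · simp
  have reindexA : ∑ i ∈ s, A (c i) = ∑ j, A (c (s.equivFin.symm j)) := by
    rw [← sum_coe_sort]
    exact (s.equivFin.symm.sum_comp fun i => A (c i)).symm
  have reindexM : ∑ i ∈ s, c i = ∑ j, c (s.equivFin.symm j) := by
    rw [← sum_coe_sort]
    exact (s.equivFin.symm.sum_comp fun i => c i).symm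
  rw [reindexA, reindexM]
  exact (hF _).1 ⟨_, _, hs.card_pos, le_rfl, rfl⟩

theorem le (x : M) : A x ≤ F x := by
  simpa using hF.sum_le univ (fun _ : Unit => x)

theorem monotone : Monotone F := fun _ _ hxy =>
  (hF _).2 fun _ ⟨k, c, hk, hc, hs⟩ => (hF _).1 ⟨k, c, hk, hc.trans hxy, hs⟩

section Canonical

variable [CanonicallyOrderedAdd M]

theorem map_zero (hA0 : A 0 = 0) : F 0 = 0 := by
  refine le_antisymm ((hF 0).2 ?_) zero_le
  rintro _ ⟨k, c, -, hc, rfl⟩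
  have hc0 : ∀ j, c j = 0 := by
    simpa using nonpos_iff_eq_zero.1 hc
  simp [hc0, hA0]

variable [IsOrderedAddMonoid M]

theorem add_le (a b : M) : F a + F b ≤ F (a + b) := by
  have hsum : ∀ s ∈ decompositionSums A a, ∀ t ∈ decompositionSums A b, s + t ≤ F (a + b) := by
    rintro _ ⟨k, c, hk, hc, rfl⟩ _ ⟨l, d, -, hd, rfl⟩
    simpa [Fin.sum_univ_add] using (hF (a + b)).1 ⟨k + l, Fin.append c d, by omega,
      by simpa [Fin.sum_univ_add] using add_le_add hc hd, rfl⟩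
  refine NNReal.add_le_of_isLUB (hF a) (decompositionSums_nonempty A a) fun s hs => ?_
  rw [add_comm]
  refine NNReal.add_le_of_isLUB (hF b) (decompositionSums_nonempty A b) fun t ht => ?_
  rw [add_comm]
  exact hsum s hs t ht

theorem natCast_mul_le (m : ℕ) (z : M) : (m : ℝ≥0) * F z ≤ F (m • z) := by
  induction m with
  | zero => simp
  | succ m ih =>
    rw [succ_nsmul, Nat.cast_succ, add_one_mul]
    exact (add_le_add ih le_rfl).trans (hF.add_le _ _)

theorem exists_pos_smul_le [Module ℝ≥0 M] {ε : ℝ≥0} (hε : 0 < ε) (x : M) :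
    ∃ t : ℝ≥0, 0 < t ∧ F (t • x) ≤ ε := by
  obtain ⟨N, hN⟩ := exists_nat_gt (F x / ε)
  have hN0 : (0 : ℝ≥0) < N := zero_le.trans_lt hN
  refine ⟨(N : ℝ≥0)⁻¹, inv_pos.2 hN0, le_of_mul_le_mul_left ?_ hN0⟩
  have h := hF.natCast_mul_le N ((N : ℝ≥0)⁻¹ • x)
  rw [← Nat.cast_smul_eq_nsmul ℝ≥0, smul_inv_smul₀ hN0.ne'] at h
  rw [div_lt_iff₀ hε] at hN
  exact h.trans hN.le

theorem sum_le_add_compl (hmono : Monotone A) {k : ℕ} {c : Fin k → M} {x : M}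
    (hc : ∑ l, c l ≤ x) (j : Fin k) :
    ∑ l, A (c l) ≤ A x + F (∑ l ∈ {j}ᶜ, c l) := by
  rw [← sum_add_sum_compl {j}, sum_singleton]
  exact add_le_add (hmono ((single_le_sum (fun _ _ => zero_le) (mem_univ j)).trans hc))
    (hF.sum_le _ c)

end Canonical

section Cancel

variable [IsOrderedCancelAddMonoid M] [CanonicallyOrderedAdd M]

theorem sum_add_le_of_gap (hconv : StrictDirectionallyConvex F) {k : ℕ} {c : Fin k → M} {x : M}
    (hc : ∑ l, c l ≤ x) (G : Finset (Fin k)) {a b : M} {γ : ℝ≥0}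
    (hgap : F a + F b + γ ≤ F (a + b)) (ha : a ≤ ∑ l ∈ G, c l) (hb : b ≤ ∑ l ∈ Gᶜ, c l) :
    ∑ l, A (c l) + γ ≤ F x :=
  calc ∑ l, A (c l) + γ = ∑ l ∈ G, A (c l) + ∑ l ∈ Gᶜ, A (c l) + γ := by
        rw [sum_add_sum_compl]
    _ ≤ F (∑ l ∈ G, c l) + F (∑ l ∈ Gᶜ, c l) + γ := by
        gcongr <;> exact hF.sum_le _ _
    _ ≤ F (∑ l ∈ G, c l + ∑ l ∈ Gᶜ, c l) := hconv.add_le_map_add_of_le hgap ha hb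
    _ ≤ F x := hF.monotone (by rwa [sum_add_sum_compl])

end Cancel

end IsSuperTransform

section Coordinates

variable {ι : Type*} [Fintype ι] [DecidableEq ι] {F : (ι → ℝ≥0) → ℝ≥0}

theorem StrictDirectionallyConvex.exists_pos_add_le_map_add_single
    (hconv : StrictDirectionallyConvex F) (h0 : F 0 = 0) (a : ι → ℝ≥0) :
    ∃ γ : ℝ≥0, 0 < γ ∧ ∀ i i', 0 < a i → 0 < a i' →
      F (Pi.single i (a i)) + F (Pi.single i' (a i')) + γ ≤
        F (Pi.single i (a i) + Pi.single i' (a i')) := by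
  have hev : ∀ᶠ γ in 𝓝[>] (0 : ℝ≥0), 0 < γ ∧ ∀ p : ι × ι, 0 < a p.1 → 0 < a p.2 →
      F (Pi.single p.1 (a p.1)) + F (Pi.single p.2 (a p.2)) + γ ≤
        F (Pi.single p.1 (a p.1) + Pi.single p.2 (a p.2)) := by
    refine eventually_mem_nhdsWithin.and (eventually_all.2 fun p => ?_)
    by_cases hp : 0 < a p.1 ∧ 0 < a p.2
    · obtain ⟨d, hd, hgap⟩ := exists_pos_add_of_lt'
        (hconv.add_lt_map_add h0 (Pi.single_pos.2 hp.1) (Pi.single_pos.2 hp.2))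
      filter_upwards [nhdsWithin_le_nhds (eventually_le_nhds hd)] with γ hγ _ _
      exact hgap ▸ add_le_add_right hγ _
    · exact Eventually.of_forall fun _ h₁ h₂ => absurd ⟨h₁, h₂⟩ hp
  obtain ⟨γ, hγ, hgap⟩ := hev.exists
  exact ⟨γ, hγ, fun i i' => hgap (i, i')⟩

theorem IsSuperTransform.exists_pos_forall_add_le {A : (ι → ℝ≥0) → ℝ≥0}
    (hF : IsSuperTransform A F) (hconv : StrictDirectionallyConvex F) (hA0 : A 0 = 0)
    (hmono : Monotone A) {x : ι → ℝ≥0} (hx : A x < F x) :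
    ∃ η : ℝ≥0, 0 < η ∧ ∀ s ∈ decompositionSums A x, s + η ≤ F x := by
  obtain ⟨δ, hδ, hδx⟩ := exists_pos_add_of_lt' hx
  obtain ⟨t, ht, hsmall⟩ := hF.exists_pos_smul_le (half_pos hδ) x
  set a : ι → ℝ≥0 := fun i => t * x i / 3
  obtain ⟨γ, hγ, hgap⟩ := hconv.exists_pos_add_le_map_add_single (hF.map_zero hA0) a
  refine ⟨min (δ / 2) γ, lt_min (half_pos hδ) hγ, ?_⟩
  rintro _ ⟨k, c, hk, hc, rfl⟩
  by_cases hcompl : ∃ j, ∑ l ∈ {j}ᶜ, c l ≤ t • x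
  · obtain ⟨j, hj⟩ := hcompl
    calc ∑ l, A (c l) + min (δ / 2) γ ≤ A x + F (t • x) + δ / 2 := by
          gcongr
          · exact (hF.sum_le_add_compl hmono hc j).trans (add_le_add le_rfl (hF.monotone hj))
          · exact min_le_left _ _
      _ ≤ A x + δ / 2 + δ / 2 := by gcongr
      _ = F x := by rw [add_assoc, add_halves, hδx]
  · have : Nonempty (Fin k) := ⟨⟨0, hk⟩⟩
    obtain ⟨G, i, i', hi, hi'⟩ := exists_finset_lt_sum_apply_lt_sum_compl_apply c (a := a)
      (z := t • x) (fun i => by simp [a, mul_div_cancel₀]) (not_exists.1 hcompl)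
    have ha_pos : ∀ {s : Finset (Fin k)} {i : ι}, a i < (∑ l ∈ s, c l) i → 0 < a i := by
      intro s i hi
      have hxi : 0 < x i :=
        (zero_le.trans_lt hi).trans_le (((sum_le_sum_of_subset (subset_univ s)).trans hc) i)
      positivity
    calc ∑ l, A (c l) + min (δ / 2) γ ≤ ∑ l, A (c l) + γ := by gcongr; exact min_le_right _ _
      _ ≤ F x := hF.sum_add_le_of_gap hconv hc G (hgap i i' (ha_pos hi) (ha_pos hi'))
          (Pi.single_le_of_le hi.le) (Pi.single_le_of_le hi'.le)

end Coordinates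

end AggregationFunction

/-- If `A : [0,∞)^n → [0,∞)` is an aggregation function whose super-additive
transformation `A*` is finite-valued (given by an `IsLUB` in `ℝ≥0`) and strictly
directionally convex, then `A = A*`. -/
theorem eq_superTransform_of_strictDirectionallyConvex
    (n : ℕ) (A Astar : (Fin n → ℝ≥0) → ℝ≥0)
    (hA0 : A 0 = 0) (hmono : Monotone A)
    (hstar : ∀ x : Fin n → ℝ≥0,
      IsLUB {s : ℝ≥0 | ∃ (k : ℕ) (c : Fin k → (Fin n → ℝ≥0)), 1 ≤ k ∧
        (∑ j, c j) ≤ x ∧ s = ∑ j, A (c j)} (Astar x))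
    (hconv : ∀ u v x y : Fin n → ℝ≥0, u < x → u < y → x < v → y < v → u + v = x + y →
      Astar x + Astar y < Astar u + Astar v) :
    ∀ x : Fin n → ℝ≥0, A x = Astar x := by
  have hF : AggregationFunction.IsSuperTransform A Astar := hstar
  intro x
  refine (hF.le x).antisymm (not_lt.1 fun hlt => ?_)
  obtain ⟨η, hη, hbound⟩ := hF.exists_pos_forall_add_le hconv hA0 hmono hlt
  have hle := NNReal.add_le_of_isLUB (hF x) (AggregationFunction.decompositionSums_nonempty A x)
    hbound
  exact hη.ne' (le_antisymm (by simpa using hle) zero_le)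
end

section
/- Define A : [0,∞) → [0,∞) by A(x) = x on [0,4], A(x) = x/2 + 2 on [4,6], A(x) = 5x/6 on [6,12], A(x) = 5x/4 − 5 on [12,∞). Then A is an aggregation function, its sub-additive transformation A_* equals f where f(x) = x on [0,4], f(x) = x/2+2 on [4,6], f(x) = 5x/6 on [6,∞), and its super-additive transformation A* equals g where g(x) = x on [0,20], g(x) = 5x/4 − 5 on [20,∞); moreover f is sub-additive and non-linear and g is convex (but not strictly convex), super-additive and non-linear. -/
/-- The piecewise aggregation function `A` from Example 4.1 of the paper. -/
noncomputable def exampleA (x : ℝ) : ℝ :=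
  if x ≤ 4 then x
  else if x ≤ 6 then x / 2 + 2
  else if x ≤ 12 then 5 * x / 6
  else 5 * x / 4 - 5

/-- The function `f` (the sub-additive transformation of `A`). -/
noncomputable def exampleF (x : ℝ) : ℝ :=
  if x ≤ 4 then x
  else if x ≤ 6 then x / 2 + 2
  else 5 * x / 6

/-- The function `g` (the super-additive transformation of `A`). -/
noncomputable def exampleG (x : ℝ) : ℝ :=
  if x ≤ 20 then x else 5 * x / 4 - 5

lemma exampleF_zero : exampleF 0 = 0 := by simp [exampleF]

lemma exampleG_zero : exampleG 0 = 0 := by simp [exampleG]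

lemma exampleA_mono : MonotoneOn exampleA (Set.Ici 0) := by
  intro x hx y hy hxy
  simp only [Set.mem_Ici] at hx hy
  unfold exampleA
  split_ifs <;> linarith

lemma exampleF_mono : MonotoneOn exampleF (Set.Ici 0) := by
  intro x hx y hy hxy
  simp only [Set.mem_Ici] at hx hy
  unfold exampleF
  split_ifs <;> linarith

lemma exampleG_mono : MonotoneOn exampleG (Set.Ici 0) := by
  intro x hx y hy hxy
  simp only [Set.mem_Ici] at hx hy
  unfold exampleG
  split_ifs <;> linarith

lemma exampleF_le_A (x : ℝ) (hx : 0 ≤ x) : exampleF x ≤ exampleA x := by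
  unfold exampleF exampleA
  split_ifs <;> linarith

lemma exampleA_le_G (x : ℝ) (hx : 0 ≤ x) : exampleA x ≤ exampleG x := by
  unfold exampleA exampleG
  split_ifs <;> linarith

lemma exampleF_subadd (x y : ℝ) (hx : 0 ≤ x) (hy : 0 ≤ y) :
    exampleF (x + y) ≤ exampleF x + exampleF y := by
  unfold exampleF
  split_ifs <;> linarith

lemma exampleG_superadd (x y : ℝ) (hx : 0 ≤ x) (hy : 0 ≤ y) :
    exampleG x + exampleG y ≤ exampleG (x + y) := by
  unfold exampleG
  split_ifs <;> linarith

lemma exampleF_sum {ι : Type*} (s : Finset ι) (d : ι → ℝ) (hd : ∀ i ∈ s, 0 ≤ d i) :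
    exampleF (∑ i ∈ s, d i) ≤ ∑ i ∈ s, exampleF (d i) := by
  classical
  induction s using Finset.induction with
  | empty => simp [exampleF_zero]
  | @insert a t h ih =>
    rw [Finset.sum_insert h, Finset.sum_insert h]
    have h1 : 0 ≤ d a := hd a (Finset.mem_insert_self a t)
    have h2 : ∀ i ∈ t, 0 ≤ d i := fun i hi => hd i (Finset.mem_insert_of_mem hi)
    have h3 : 0 ≤ ∑ i ∈ t, d i := Finset.sum_nonneg h2
    calc exampleF (d a + ∑ i ∈ t, d i) ≤ exampleF (d a) + exampleF (∑ i ∈ t, d i) :=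
          exampleF_subadd _ _ h1 h3
      _ ≤ exampleF (d a) + ∑ i ∈ t, exampleF (d i) := by linarith [ih h2]

lemma exampleG_sum {ι : Type*} (s : Finset ι) (c : ι → ℝ) (hc : ∀ i ∈ s, 0 ≤ c i) :
    ∑ i ∈ s, exampleG (c i) ≤ exampleG (∑ i ∈ s, c i) := by
  classical
  induction s using Finset.induction with
  | empty => simp [exampleG_zero]
  | @insert a t h ih =>
    rw [Finset.sum_insert h, Finset.sum_insert h]
    have h1 : 0 ≤ c a := hc a (Finset.mem_insert_self a t)
    have h2 : ∀ i ∈ t, 0 ≤ c i := fun i hi => hc i (Finset.mem_insert_of_mem hi)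
    have h3 : 0 ≤ ∑ i ∈ t, c i := Finset.sum_nonneg h2
    calc exampleG (c a) + ∑ i ∈ t, exampleG (c i)
        ≤ exampleG (c a) + exampleG (∑ i ∈ t, c i) := by linarith [ih h2]
      _ ≤ exampleG (c a + ∑ i ∈ t, c i) := exampleG_superadd _ _ h1 h3

/-- Membership of `exampleF x` in the sub-additive transformation set. -/
lemma exampleF_mem (x : ℝ) (hx : 0 ≤ x) :
    exampleF x ∈ {s : ℝ | ∃ (k : ℕ) (d : Fin k → ℝ), 1 ≤ k ∧ (∀ i, 0 ≤ d i) ∧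
      x ≤ (∑ i, d i) ∧ s = ∑ i, exampleA (d i)} := by
  by_cases h12 : x ≤ 12
  · refine ⟨1, fun _ => x, le_refl 1, fun _ => hx, by simp, ?_⟩
    simp only [Finset.univ_unique, Finset.sum_singleton]
    unfold exampleF exampleA
    split_ifs <;> linarith
  · push_neg at h12
    set n : ℕ := ⌈x / 12⌉₊ with hn
    have hle : x / 12 ≤ (n : ℝ) := Nat.le_ceil _
    have hlt : (n : ℝ) < x / 12 + 1 := Nat.ceil_lt_add_one (by positivity)
    have hnpos : (0 : ℝ) < n := by nlinarith
    have hn0 : n ≠ 0 := by positivity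
    have h6 : 6 < x / n := by rw [lt_div_iff₀ hnpos]; nlinarith
    have hA : exampleA (x / n) = 5 * (x / n) / 6 := by
      have h12' : x / n ≤ 12 := by rw [div_le_iff₀ hnpos]; nlinarith
      unfold exampleA
      split_ifs <;> linarith
    refine ⟨n, fun _ => x / n, Nat.one_le_iff_ne_zero.mpr hn0, fun _ => by positivity, ?_, ?_⟩
    · rw [Finset.sum_const, Finset.card_univ, Fintype.card_fin, nsmul_eq_mul]
      rw [mul_div_cancel₀ _ (ne_of_gt hnpos)]
    · rw [Finset.sum_const, Finset.card_univ, Fintype.card_fin, nsmul_eq_mul, hA]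
      have : exampleF x = 5 * x / 6 := by unfold exampleF; split_ifs <;> linarith
      rw [this]
      field_simp

/-- Membership of `exampleG x` in the super-additive transformation set. -/
lemma exampleG_mem (x : ℝ) (hx : 0 ≤ x) :
    exampleG x ∈ {s : ℝ | ∃ (k : ℕ) (c : Fin k → ℝ), 1 ≤ k ∧ (∀ j, 0 ≤ c j) ∧
      (∑ j, c j) ≤ x ∧ s = ∑ j, exampleA (c j)} := by
  by_cases h20 : x ≤ 20
  · set n : ℕ := max ⌈x / 4⌉₊ 1 with hn
    have hn1 : 1 ≤ n := le_max_right _ _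
    have hnpos : (0 : ℝ) < n := by exact_mod_cast hn1
    have hle : x / 4 ≤ (n : ℝ) := le_trans (Nat.le_ceil _) (by exact_mod_cast le_max_left _ _)
    have h4 : x / n ≤ 4 := by rw [div_le_iff₀ hnpos]; nlinarith
    have hA : exampleA (x / n) = x / n := by
      unfold exampleA; split_ifs <;> linarith
    refine ⟨n, fun _ => x / n, hn1, fun _ => by positivity, ?_, ?_⟩
    · rw [Finset.sum_const, Finset.card_univ, Fintype.card_fin, nsmul_eq_mul]
      rw [mul_div_cancel₀ _ (ne_of_gt hnpos)]
    · rw [Finset.sum_const, Finset.card_univ, Fintype.card_fin, nsmul_eq_mul, hA]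
      have : exampleG x = x := by unfold exampleG; split_ifs <;> linarith
      rw [this, mul_div_cancel₀ _ (ne_of_gt hnpos)]
  · push_neg at h20
    refine ⟨1, fun _ => x, le_refl 1, fun _ => hx, by simp, ?_⟩
    simp only [Finset.univ_unique, Finset.sum_singleton]
    unfold exampleG exampleA
    split_ifs <;> linarith

lemma id_le_exampleG (t : ℝ) (ht : 0 ≤ t) : t ≤ exampleG t := by
  unfold exampleG; split_ifs <;> linarith

lemma lin_le_exampleG (t : ℝ) (ht : 0 ≤ t) : 5 * t / 4 - 5 ≤ exampleG t := by
  unfold exampleG; split_ifs <;> linarith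

/-- `A` is an aggregation function with `A_* = f` and `A* = g`; moreover `f`
is sub-additive and non-linear, and `g` is convex (but not strictly convex), super-additive
and non-linear. -/
theorem example_aggregation_with_nonstrict_transforms :
    (exampleA 0 = 0 ∧ MonotoneOn exampleA (Set.Ici 0)) ∧
    (∀ x, 0 ≤ x →
      IsGLB {s : ℝ | ∃ (k : ℕ) (d : Fin k → ℝ), 1 ≤ k ∧ (∀ i, 0 ≤ d i) ∧
        x ≤ (∑ i, d i) ∧ s = ∑ i, exampleA (d i)} (exampleF x)) ∧
    (∀ x, 0 ≤ x →
      IsLUB {s : ℝ | ∃ (k : ℕ) (c : Fin k → ℝ), 1 ≤ k ∧ (∀ j, 0 ≤ c j) ∧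
        (∑ j, c j) ≤ x ∧ s = ∑ j, exampleA (c j)} (exampleG x)) ∧
    (∀ x y : ℝ, 0 ≤ x → 0 ≤ y → exampleF (x + y) ≤ exampleF x + exampleF y) ∧
    (¬ ∃ c : ℝ, ∀ x, 0 ≤ x → exampleF x = c * x) ∧
    ConvexOn ℝ (Set.Ici 0) exampleG ∧
    (¬ StrictConvexOn ℝ (Set.Ici 0) exampleG) ∧
    (∀ x y : ℝ, 0 ≤ x → 0 ≤ y → exampleG x + exampleG y ≤ exampleG (x + y)) ∧
    (¬ ∃ c : ℝ, ∀ x, 0 ≤ x → exampleG x = c * x) := by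
  refine ⟨⟨by simp [exampleA], exampleA_mono⟩, ?_, ?_, exampleF_subadd, ?_, ?_, ?_,
    exampleG_superadd, ?_⟩
  · -- IsGLB for f
    intro x hx
    constructor
    · rintro s ⟨k, d, hk, hd, hxd, rfl⟩
      have hsum : 0 ≤ ∑ i, d i := Finset.sum_nonneg fun i _ => hd i
      calc exampleF x ≤ exampleF (∑ i, d i) := exampleF_mono hx hsum hxd
        _ ≤ ∑ i, exampleF (d i) := exampleF_sum _ _ fun i _ => hd i
        _ ≤ ∑ i, exampleA (d i) := Finset.sum_le_sum fun i _ => exampleF_le_A _ (hd i)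
    · intro lb hlb
      exact hlb (exampleF_mem x hx)
  · -- IsLUB for g
    intro x hx
    constructor
    · rintro s ⟨k, c, hk, hc, hcx, rfl⟩
      have hsum : 0 ≤ ∑ i, c i := Finset.sum_nonneg fun i _ => hc i
      calc ∑ i, exampleA (c i) ≤ ∑ i, exampleG (c i) :=
            Finset.sum_le_sum fun i _ => exampleA_le_G _ (hc i)
        _ ≤ exampleG (∑ i, c i) := exampleG_sum _ _ fun i _ => hc i
        _ ≤ exampleG x := exampleG_mono hsum hx hcx
    · intro ub hub
      exact hub (exampleG_mem x hx)
  · -- f non-linear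
    rintro ⟨c, hc⟩
    have h1 := hc 1 (by norm_num)
    have h2 := hc 12 (by norm_num)
    simp [exampleF] at h1 h2
    norm_num [exampleF] at h1 h2
    nlinarith
  · -- g convex
    refine ⟨convex_Ici 0, ?_⟩
    intro x hx y hy a b ha hb hab
    simp only [Set.mem_Ici] at hx hy
    simp only [smul_eq_mul]
    have hgx1 := id_le_exampleG x hx
    have hgx2 := lin_le_exampleG x hx
    have hgy1 := id_le_exampleG y hy
    have hgy2 := lin_le_exampleG y hy
    have hz : 0 ≤ a * x + b * y := by positivity
    unfold exampleG
    split_ifs <;> nlinarith [mul_le_mul_of_nonneg_left hgx1 ha,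
      mul_le_mul_of_nonneg_left hgx2 ha, mul_le_mul_of_nonneg_left hgy1 hb,
      mul_le_mul_of_nonneg_left hgy2 hb]
  · -- g not strictly convex
    intro h
    have := h.2 (show (0:ℝ) ∈ Set.Ici (0:ℝ) by norm_num)
      (show (20:ℝ) ∈ Set.Ici (0:ℝ) by norm_num) (by norm_num : (0:ℝ) ≠ 20)
      (by norm_num : (0:ℝ) < 1/2) (by norm_num : (0:ℝ) < 1/2) (by norm_num)
    norm_num [exampleG] at this
  · -- g non-linear
    rintro ⟨c, hc⟩
    have h1 := hc 1 (by norm_num)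
    have h2 := hc 40 (by norm_num)
    norm_num [exampleG] at h1 h2
    nlinarith
end
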